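/- arXiv:1902.03910 — 7 statements merged into one kernel-verified Lean document; each statement's English description precedes it below -/
import Mathlib

section
/- Let n ≥ 1 and let α be a fixed-point-free involution of ZMod (2n) that is non-crossing. Then the permutation p of ZMod (2n) defined by p j = α (j + 1) has exactly n + 1 orbits. (Equivalently: a planar chord diagram on one circle with n chords has exactly n + 1 planar loops; this is the count of planar loops underlying the paper's notion of Hopf triples and Hopf divisors, where a diagram on l circles with δ chords has l + δ planar loops.) -/
/-- `j` lies strictly between `a` and `b` in the positive cyclic order on `ZMod m`:
the open cyclic interval from `a` to `b` consists of the points met strictly between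
`a` and `b` when traveling from `a` in the positive direction. -/
def CyclicBetween {m : ℕ} (a b j : ZMod m) : Prop :=
  0 < (j - a).val ∧ (j - a).val < (b - a).val

/-- The chords `{i, α i}` and `{j, α j}` cross: exactly one of `j`, `α j` lies in the
open cyclic interval from `i` to `α i`. -/
def ChordsCross {m : ℕ} (α : Equiv.Perm (ZMod m)) (i j : ZMod m) : Prop :=
  Xor' (CyclicBetween i (α i) j) (CyclicBetween i (α i) (α j))

/-- The chord diagram encoded by the involution `α` is non-crossing (planar):
no two distinct chords cross. -/
def NonCrossing {m : ℕ} (α : Equiv.Perm (ZMod m)) : Prop :=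
  ∀ i j : ZMod m, j ≠ i → j ≠ α i → ¬ ChordsCross α i j

/-- The "planar loop" permutation `p j = α (j + 1)` on arc labels. -/
def loopPerm {m : ℕ} (α : Equiv.Perm (ZMod m)) : Equiv.Perm (ZMod m) :=
  (Equiv.addRight (1 : ZMod m)).trans α

/-- The setoid whose equivalence classes are the orbits of a permutation. -/
def orbitSetoid {β : Type*} (p : Equiv.Perm β) : Setoid β :=
  ⟨p.SameCycle,
    ⟨fun x => Equiv.Perm.SameCycle.refl p x, fun h => h.symm, fun h h' => h.trans h'⟩⟩

/-!
Induction on the number of chords. A non-crossing fixed-point-free involution always has a chord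
`{i, i + 1}` joining neighbouring points (take a chord of minimal cyclic length: any chord starting
strictly inside it would have to end inside it too, and be shorter). For the loop permutation `p`,
such a chord makes the arc `i` a loop by itself (`p i = i`), and deleting the chord leaves the
diagram on the remaining `2n - 2` points whose loop permutation is `p` with `i` removed and the arc
`i + 1` cut out of its cycle. Cutting a point out of a non-trivial cycle keeps the number of
cycles, so exactly one loop is lost. The base case `n = 1` is the single chord, with two loops.
-/

open Equiv Equiv.Perm Function Set

namespace Equiv.Perm

theorem SameCycle.apply_eq_of_invariant {β γ : Type*} {p : Perm β} {g : β → γ}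
    (hg : ∀ x, g (p x) = g x) {x y : β} (h : p.SameCycle x y) : g x = g y := by
  obtain ⟨k, rfl⟩ := h
  induction k using Int.induction_on generalizing x with
  | zero => rfl
  | succ k ih => rw [zpow_add_one, Perm.mul_apply, ← ih, hg]
  | pred k ih =>
    rw [zpow_sub_one, Perm.mul_apply, ← ih, ← hg (p⁻¹ x), Perm.coe_inv, apply_symm_apply]

end Equiv.Perm

theorem mk_orbitSetoid_eq_iff {β : Type*} {p : Perm β} {x y : β} :
    Quotient.mk (orbitSetoid p) x = Quotient.mk (orbitSetoid p) y ↔ p.SameCycle x y :=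
  Quotient.eq

theorem card_quotient_orbitSetoid_one (β : Type*) :
    Nat.card (Quotient (orbitSetoid (1 : Perm β))) = Nat.card β :=
  (Nat.card_congr (Equiv.ofBijective _
    ⟨fun _ _ h => sameCycle_one.1 (mk_orbitSetoid_eq_iff.1 h), Quotient.mk_surjective⟩)).symm

section Splice

variable {β γ : Type*} {p : Perm β} {q : Perm γ} {ι : γ → β} {a b : β}

theorem exists_eq_apply_of_range_eq (hrange : range ι = {a, b}ᶜ) (ha : p a = a)
    (hb : p b ≠ b) : ∃ z, ι z = p b := by
  have hpb : p b ≠ a := fun h => hb (by rw [p.injective (h.trans ha.symm), ha])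
  simpa [← mem_range, hrange] using And.intro hpb hb

/-- The hypotheses say that, read through `ι`, the permutation `q` is `p` with the fixed point `a`
deleted and the point `b` cut out of its cycle (`p⁻¹ b` is sent straight to `p b`). -/
theorem sameCycle_iff_of_splice [DecidableEq β] (hι : Injective ι)
    (hrange : range ι = {a, b}ᶜ) (ha : p a = a) (hb : p b ≠ b)
    (hq : ∀ x, ι (q x) = if p (ι x) = b then p b else p (ι x)) {x y : γ} :
    q.SameCycle x y ↔ p.SameCycle (ι x) (ι y) := by
  have hmem : ∀ y, y ∈ range ι ↔ y ≠ a ∧ y ≠ b := fun y => by simp [hrange]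
  constructor
  · intro h
    refine mk_orbitSetoid_eq_iff.1
      (h.apply_eq_of_invariant (g := fun z => Quotient.mk _ (ι z)) fun z => ?_)
    rw [mk_orbitSetoid_eq_iff, hq]
    split_ifs with hz
    · rw [← hz, sameCycle_apply_left, sameCycle_apply_left]
    · exact sameCycle_apply_left.2 SameCycle.rfl
  · obtain ⟨z, hz⟩ := exists_eq_apply_of_range_eq hrange ha hb
    have : Nonempty γ := ⟨z⟩
    have hqz : ∀ x, p (ι x) = b → q x = z := fun x hx => hι (by rw [hq, if_pos hx, hz])
    let g : β → Quotient (orbitSetoid q) := fun y =>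
      if y = b then Quotient.mk _ z else Quotient.mk _ (invFun ι y)
    have hgι : ∀ x, g (ι x) = Quotient.mk _ x := fun x => by
      have hxb : ι x ≠ b := ((hmem _).1 (mem_range_self x)).2
      simp only [g, if_neg hxb, leftInverse_invFun hι x]
    have hg : ∀ y, g (p y) = g y := by
      intro y
      by_cases hyb : y = b
      · subst hyb
        simp only [g, if_neg hb, if_pos rfl]
        rw [← hz, leftInverse_invFun hι z]
      by_cases hya : y = a
      · rw [hya, ha]
      obtain ⟨x, rfl⟩ := (hmem y).2 ⟨hya, hyb⟩
      rw [hgι]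
      by_cases hxb : p (ι x) = b
      · simp only [g, hxb, if_pos, ← hqz x hxb, mk_orbitSetoid_eq_iff, sameCycle_apply_left]
        exact SameCycle.rfl
      · have : p (ι x) = ι (q x) := by rw [hq, if_neg hxb]
        rw [this, hgι, mk_orbitSetoid_eq_iff, sameCycle_apply_left]
    intro h
    rw [← mk_orbitSetoid_eq_iff, ← hgι, ← hgι]
    exact h.apply_eq_of_invariant hg

theorem card_quotient_orbitSetoid_of_splice [DecidableEq β] [Finite γ] (hι : Injective ι)
    (hrange : range ι = {a, b}ᶜ) (ha : p a = a) (hb : p b ≠ b)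
    (hq : ∀ x, ι (q x) = if p (ι x) = b then p b else p (ι x)) :
    Nat.card (Quotient (orbitSetoid p)) = Nat.card (Quotient (orbitSetoid q)) + 1 := by
  have hsc : ∀ {x y}, q.SameCycle x y ↔ p.SameCycle (ι x) (ι y) :=
    sameCycle_iff_of_splice hι hrange ha hb hq
  have hmem : ∀ y, y ∈ range ι ↔ y ≠ a ∧ y ≠ b := fun y => by simp [hrange]
  have haι : ∀ x, ι x ≠ a := fun x => ((hmem _).1 (mem_range_self x)).1
  let G : Option (Quotient (orbitSetoid q)) → Quotient (orbitSetoid p) :=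
    fun o => o.elim (Quotient.mk _ a) (Quotient.map ι fun _ _ => hsc.1)
  have hG : Bijective G := by
    constructor
    · rintro (_ | ⟨⟨x⟩⟩) (_ | ⟨⟨y⟩⟩) h
      · rfl
      · exact (haι y ((mk_orbitSetoid_eq_iff.1 h).eq_of_left ha).symm).elim
      · exact (haι x ((mk_orbitSetoid_eq_iff.1 h).eq_of_right ha)).elim
      · exact congrArg some (Quotient.sound (hsc.2 (mk_orbitSetoid_eq_iff.1 h)))
    · rintro ⟨y⟩
      by_cases hya : y = a
      · exact ⟨none, by rw [hya]; rfl⟩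
      by_cases hyb : y = b
      · obtain ⟨z, hz⟩ := exists_eq_apply_of_range_eq hrange ha hb
        refine ⟨some (Quotient.mk _ z), mk_orbitSetoid_eq_iff.2 ?_⟩
        rw [hz, hyb, sameCycle_apply_left]
      · obtain ⟨x, rfl⟩ := (hmem y).2 ⟨hya, hyb⟩
        exact ⟨some (Quotient.mk _ x), rfl⟩
  rw [← Finite.card_option, Nat.card_congr (Equiv.ofBijective G hG)]

end Splice

@[simp]
theorem loopPerm_apply {m : ℕ} (α : Perm (ZMod m)) (j : ZMod m) : loopPerm α j = α (j + 1) :=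
  rfl

theorem ZMod.val_sub_eq_ite {n : ℕ} [NeZero n] (a b : ZMod n) :
    (a - b).val = if b.val ≤ a.val then a.val - b.val else n + a.val - b.val := by
  split_ifs with h
  · exact ZMod.val_sub h
  · have hba : b - a ≠ 0 := sub_ne_zero.2 fun h' => h (h' ▸ le_rfl)
    rw [← neg_sub, ZMod.neg_val, if_neg hba, ZMod.val_sub (by omega)]
    have := b.val_lt
    omega

theorem cyclicBetween_add_left {m : ℕ} (c a b j : ZMod m) :
    CyclicBetween (c + a) (c + b) (c + j) ↔ CyclicBetween a b j := by
  simp only [CyclicBetween, add_sub_add_left_eq_sub]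

theorem cyclicBetween_natCast_val {K M : ℕ} [NeZero K] (hKM : K ≤ M) (u v w : ZMod K) :
    CyclicBetween (u.val : ZMod M) (v.val : ZMod M) (w.val : ZMod M) ↔ CyclicBetween u v w := by
  have : NeZero M := ⟨by have := NeZero.ne K; omega⟩
  have hu := u.val_lt; have hv := v.val_lt; have hw := w.val_lt
  simp only [CyclicBetween, ZMod.val_sub_eq_ite, ZMod.val_cast_of_lt (lt_of_lt_of_le hu hKM),
    ZMod.val_cast_of_lt (lt_of_lt_of_le hv hKM), ZMod.val_cast_of_lt (lt_of_lt_of_le hw hKM)]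
  split_ifs <;> omega

theorem NonCrossing.comap {K M : ℕ} {α : Perm (ZMod M)} {β : Perm (ZMod K)}
    {ι : ZMod K → ZMod M} (h : NonCrossing α) (hι : Injective ι)
    (hcb : ∀ u v w, CyclicBetween (ι u) (ι v) (ι w) ↔ CyclicBetween u v w)
    (hβ : ∀ x, ι (β x) = α (ι x)) : NonCrossing β := by
  intro i j hji hjβ hcross
  refine h (ι i) (ι j) (hι.ne hji) (by rw [← hβ]; exact hι.ne hjβ) ?_
  simpa only [ChordsCross, ← hβ, hcb] using hcross

theorem NonCrossing.exists_apply_eq_add_one {m : ℕ} (hm : 1 < m) {α : Perm (ZMod m)}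
    (h : NonCrossing α) (hfree : ∀ i, α i ≠ i) : ∃ i, α i = i + 1 := by
  have : Fact (1 < m) := ⟨hm⟩
  obtain ⟨i, hmin⟩ := Finite.exists_min fun i => (α i - i).val
  refine ⟨i, by_contra fun hne => ?_⟩
  have hlen : 1 < (α i - i).val := by
    have h0 : (α i - i).val ≠ 0 := (ZMod.val_ne_zero _).2 (sub_ne_zero.2 (hfree i))
    have h1 : (α i - i).val ≠ 1 := fun h1 =>
      hne (sub_eq_iff_eq_add'.1 ((ZMod.val_eq_one hm _).1 h1))
    omega
  have hnext : CyclicBetween i (α i) (i + 1) := by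
    simp only [CyclicBetween, add_sub_cancel_left, ZMod.val_one]
    omega
  have hpartner : CyclicBetween i (α i) (α (i + 1)) := by
    by_contra hout
    exact h i (i + 1) (by simp) (Ne.symm hne) (Or.inl ⟨hnext, hout⟩)
  have hshorter : (α (i + 1) - (i + 1)).val = (α (i + 1) - i).val - 1 := by
    rw [sub_add_eq_sub_sub, ZMod.val_sub (by rw [ZMod.val_one]; exact hpartner.1), ZMod.val_one]
  have hminimal := hmin (i + 1)
  have hinside := hpartner.2
  omega

section SkipTwo

variable {K : ℕ} [NeZero K]

/-- The relabelling of the points of the diagram that survive deleting the chord `{i, i + 1}`. -/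
def skipTwo (i : ZMod (K + 2)) (x : ZMod K) : ZMod (K + 2) :=
  i + 2 + x.val

theorem val_skipTwo_sub (i : ZMod (K + 2)) (x : ZMod K) : (skipTwo i x - i).val = x.val + 2 := by
  have : skipTwo i x - i = ((x.val + 2 : ℕ) : ZMod (K + 2)) := by
    simp only [skipTwo]; push_cast; ring
  rw [this, ZMod.val_cast_of_lt (by have := x.val_lt; omega)]

theorem skipTwo_injective (i : ZMod (K + 2)) : Injective (skipTwo i) := by
  intro x y h
  have := congrArg (fun z => (z - i).val) h
  simp only [val_skipTwo_sub, Nat.add_right_cancel_iff] at this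
  exact ZMod.val_injective _ this

theorem skipTwo_ne_self (i : ZMod (K + 2)) (x : ZMod K) : skipTwo i x ≠ i := fun h => by
  simpa [h] using val_skipTwo_sub i x

theorem skipTwo_ne_add_one (i : ZMod (K + 2)) (x : ZMod K) : skipTwo i x ≠ i + 1 := fun h => by
  have := val_skipTwo_sub i x
  rw [h, add_sub_cancel_left, ZMod.val_one_eq_one_mod, Nat.mod_eq_of_lt (by omega)] at this
  omega

theorem range_skipTwo (i : ZMod (K + 2)) : range (skipTwo i) = {i, i + 1}ᶜ := by
  ext y
  simp only [mem_range, mem_compl_iff, mem_insert_iff, mem_singleton_iff, not_or]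
  constructor
  · rintro ⟨x, rfl⟩
    exact ⟨skipTwo_ne_self i x, skipTwo_ne_add_one i x⟩
  · rintro ⟨hi, hi1⟩
    have h0 : (y - i).val ≠ 0 := (ZMod.val_ne_zero _).2 (sub_ne_zero.2 hi)
    have h1 : (y - i).val ≠ 1 := fun h =>
      hi1 (sub_eq_iff_eq_add'.1 ((ZMod.val_eq_one (by omega) _).1 h))
    refine ⟨((y - i).val - 2 : ℕ), ?_⟩
    rw [skipTwo, ZMod.val_cast_of_lt (by have := (y - i).val_lt; omega), Nat.cast_sub (by omega),
      ZMod.natCast_zmod_val]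
    push_cast; ring

theorem skipTwo_add_one (i : ZMod (K + 2)) (x : ZMod K) :
    skipTwo i (x + 1) = if skipTwo i x + 1 = i then i + 2 else skipTwo i x + 1 := by
  have hx := x.val_lt
  by_cases hlast : x.val + 1 = K
  · have hx0 : x + 1 = 0 := by
      have : ((x.val + 1 : ℕ) : ZMod K) = 0 := by rw [hlast, ZMod.natCast_self]
      push_cast [ZMod.natCast_zmod_val] at this
      exact this
    have hwrap : skipTwo i x + 1 = i := by
      have : ((x.val + 3 : ℕ) : ZMod (K + 2)) = 0 := by
        rw [show x.val + 3 = K + 2 by omega, ZMod.natCast_self]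
      push_cast at this
      simp only [skipTwo]
      linear_combination this
    rw [if_pos hwrap, hx0, skipTwo, ZMod.val_zero, Nat.cast_zero, add_zero]
  · have hstep : skipTwo i (x + 1) = skipTwo i x + 1 := by
      have : x + 1 = ((x.val + 1 : ℕ) : ZMod K) := by push_cast [ZMod.natCast_zmod_val]; rfl
      rw [skipTwo, this, ZMod.val_cast_of_lt (by omega), skipTwo]
      push_cast; ring
    rw [if_neg (hstep ▸ skipTwo_ne_self i (x + 1)), hstep]

theorem cyclicBetween_skipTwo (i : ZMod (K + 2)) (u v w : ZMod K) :
    CyclicBetween (skipTwo i u) (skipTwo i v) (skipTwo i w) ↔ CyclicBetween u v w := by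
  simp only [skipTwo]
  rw [cyclicBetween_add_left, cyclicBetween_natCast_val (by omega)]

variable {α : Perm (ZMod (K + 2))} {i : ZMod (K + 2)}

theorem exists_perm_skipTwo_comm (hα : Involutive α) (hi : α i = i + 1) :
    ∃ β : Perm (ZMod K), ∀ x, skipTwo i (β x) = α (skipTwo i x) := by
  have hmem : ∀ x, α (skipTwo i x) ∈ range (skipTwo i) := by
    intro x
    rw [range_skipTwo]
    simp only [mem_compl_iff, mem_insert_iff, mem_singleton_iff, not_or]
    refine ⟨fun h => skipTwo_ne_add_one i x ?_, fun h => skipTwo_ne_self i x ?_⟩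
    · rw [← hα (skipTwo i x), h, hi]
    · rw [← hα (skipTwo i x), h, ← hi, hα]
  let f : ZMod K → ZMod K := fun x => invFun (skipTwo i) (α (skipTwo i x))
  have hf : ∀ x, skipTwo i (f x) = α (skipTwo i x) := fun x => invFun_eq (hmem x)
  have hinv : Involutive f := fun x => skipTwo_injective i (by rw [hf, hf, hα])
  exact ⟨hinv.toPerm, hf⟩

theorem card_loops_eq_of_skipTwo_comm (hα : Involutive α) (hi : α i = i + 1)
    {β : Perm (ZMod K)} (hβ : ∀ x, skipTwo i (β x) = α (skipTwo i x)) :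
    Nat.card (Quotient (orbitSetoid (loopPerm α))) =
      Nat.card (Quotient (orbitSetoid (loopPerm β))) + 1 := by
  refine card_quotient_orbitSetoid_of_splice (skipTwo_injective i) (range_skipTwo i)
    (by rw [loopPerm_apply, ← hi, hα]) ?_ fun x => ?_
  · intro h
    rw [loopPerm_apply, add_assoc, one_add_one_eq_two, ← hi, α.injective.eq_iff] at h
    exact skipTwo_ne_self i 0 (by simpa [skipTwo] using h)
  · have hb : α (skipTwo i x + 1) = i + 1 ↔ skipTwo i x + 1 = i := by
      rw [← hi, α.injective.eq_iff]
    simp only [loopPerm_apply, hβ, skipTwo_add_one, hb, add_assoc, one_add_one_eq_two]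
    split_ifs <;> rfl

end SkipTwo

theorem card_loops_zmod_two {α : Perm (ZMod 2)} (hfree : ∀ i, α i ≠ i) :
    Nat.card (Quotient (orbitSetoid (loopPerm α))) = 2 := by
  have hloop : loopPerm α = 1 := by
    ext j
    have hflip : ∀ x y : ZMod 2, x ≠ y → x = y + 1 := by decide
    have htwo : ∀ x : ZMod 2, x + 1 + 1 = x := by decide
    rw [loopPerm_apply, hflip _ _ (hfree _), htwo, Perm.one_apply]
  rw [hloop, card_quotient_orbitSetoid_one, Nat.card_zmod]

/-- A planar chord diagram on one circle with `n ≥ 1` chords has exactly `n + 1`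
planar loops: the permutation `p j = α (j + 1)` has exactly `n + 1` orbits. -/
theorem planar_chord_diagram_loop_count
    (n : ℕ) (hn : 1 ≤ n) (α : Equiv.Perm (ZMod (2 * n)))
    (hinv : ∀ i, α (α i) = i) (hfree : ∀ i, α i ≠ i)
    (hplanar : NonCrossing α) :
    Nat.card (Quotient (orbitSetoid (loopPerm α))) = n + 1 := by
  induction n, hn using Nat.le_induction with
  | base => exact card_loops_zmod_two hfree
  | succ n hn ih =>
    have : NeZero (2 * n) := ⟨by omega⟩
    obtain ⟨i, hi⟩ := hplanar.exists_apply_eq_add_one (by omega) hfree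
    obtain ⟨β, hβ⟩ := exists_perm_skipTwo_comm (K := 2 * n) hinv hi
    have hι := skipTwo_injective (K := 2 * n) i
    rw [card_loops_eq_of_skipTwo_comm hinv hi hβ, ih β
      (fun x => hι (by rw [hβ, hβ, hinv]))
      (fun x h => hfree _ (by rw [← hβ, h]))
      (hplanar.comap hι (cyclicBetween_skipTwo i) hβ)]
end

section
/- Let l ≥ 1, let n : Fin l → ℕ with n k ≥ 1 for every k, and for each k let α k be a fixed-point-free involution of ZMod (2 · n k) that is non-crossing. Then the permutation of the disjoint union Σ k : Fin l, ZMod (2 · n k) acting on the k-th summand by j ↦ α k (j + 1) has exactly l + Σ k, n k orbits. (Equivalently: a planar chord diagram on l circles with a total of δ chords has exactly l + δ planar loops, as asserted and used throughout the paper.) -/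
/-!
The loops of a disjoint union of diagrams are the disjoint union of their loops, so it suffices
to show that a planar diagram with `c` chords on one circle has `c + 1` loops. Without chords
there is one loop. Otherwise take a shortest chord `(i, α i)`: planarity leaves no chord endpoint
strictly beneath it, so the arcs `i, …, α i - 1` form a loop avoiding the arc `i - 1`. Deleting
the chord multiplies the loop permutation by the transposition of the arcs `i - 1` and
`α i - 1`, which lie in different loops, so exactly two loops merge into one.
-/

open Equiv Function Finset

theorem Setoid.card_quotient_eq_card_quotient_add_one {β : Type*} [Finite β] {r s : Setoid β}
    (hle : r ≤ s) {a b : β} (hab : ¬ r a b) (hsab : s a b)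
    (hs : ∀ x y, s x y → ¬ r x b → ¬ r y b → r x y) :
    Nat.card (Quotient r) = Nat.card (Quotient s) + 1 := by
  classical
  let φ : {c : Quotient r // c ≠ ⟦b⟧} → Quotient s := fun c => Quotient.map' id hle c.1
  have hφ : Bijective φ := by
    constructor
    · rintro ⟨⟨x⟩, hx⟩ ⟨⟨y⟩, hy⟩ hxy
      have hxb : ¬ r x b := fun h => hx (Quotient.sound h)
      have hyb : ¬ r y b := fun h => hy (Quotient.sound h)
      exact Subtype.ext (Quotient.sound (hs x y (Quotient.exact hxy) hxb hyb))
    · rintro ⟨x⟩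
      by_cases hxb : r x b
      · exact ⟨⟨⟦a⟧, fun h => hab (Quotient.exact h)⟩,
          Quotient.sound (s.trans hsab (s.symm (hle hxb)))⟩
      · exact ⟨⟨⟦x⟧, fun h => hxb (Quotient.exact h)⟩, rfl⟩
  rw [← Nat.card_congr (Equiv.ofBijective φ hφ), ← Finite.card_option,
    Nat.card_congr (Equiv.optionSubtypeNe _)]

namespace Equiv.Perm

section Swap

variable {β : Type*} {p : Perm β} {a b x y : β}

theorem SameCycle.rel_of_forall_rel_apply {R : β → β → Prop} (hR : Equivalence R)
    (hp : ∀ z, R z (p z)) (h : p.SameCycle x y) : R x y := by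
  obtain ⟨n, rfl⟩ := h
  induction n using Int.induction_on with
  | zero => exact hR.refl x
  | succ n ih => exact hR.trans ih (by rw [add_comm, zpow_one_add, mul_apply]; exact hp _)
  | pred n ih =>
    rw [sub_eq_neg_add, zpow_add, zpow_neg_one, mul_apply]
    exact hR.trans ih (hR.symm (by simpa using hp (p⁻¹ ((p ^ (-(n : ℤ))) x))))

theorem SameCycle.mem_of_mapsTo [Finite β] {C : Set β} (hC : Set.MapsTo p C C)
    (h : p.SameCycle x y) (hx : x ∈ C) : y ∈ C := by
  obtain ⟨n, -, rfl⟩ := h.exists_pow_eq'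
  exact hC.perm_pow n hx

variable [DecidableEq β]

theorem sameCycle_mul_swap_of_not_sameCycle [Finite β] (hab : ¬ p.SameCycle a b) :
    (p * swap a b).SameCycle a b := by
  by_contra h
  have hC : Set.MapsTo p {z | p.SameCycle z b ∧ (p * swap a b).SameCycle a z}
      {z | p.SameCycle z b ∧ (p * swap a b).SameCycle a z} := by
    rintro z ⟨hzb, haz⟩
    have hza : z ≠ a := by rintro rfl; exact hab hzb
    have hzb' : z ≠ b := by rintro rfl; exact h haz
    refine ⟨sameCycle_apply_left.2 hzb, ?_⟩
    simpa [mul_apply, swap_apply_of_ne_of_ne hza hzb'] using haz.apply_right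
  have hpb : (p * swap a b).SameCycle a (p b) := ⟨1, by simp⟩
  exact h (SameCycle.mem_of_mapsTo hC (SameCycle.refl p b).apply_left
    ⟨(SameCycle.refl p b).apply_left, hpb⟩).2

theorem SameCycle.mul_swap [Finite β] (hab : ¬ p.SameCycle a b) (h : p.SameCycle x y) :
    (p * swap a b).SameCycle x y := by
  have hqab := sameCycle_mul_swap_of_not_sameCycle hab
  refine h.rel_of_forall_rel_apply (SameCycle.equivalence _) fun z => ?_
  by_cases hza : z = a
  · subst hza
    simpa [mul_apply] using hqab.apply_right
  by_cases hzb : z = b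
  · subst hzb
    simpa [mul_apply] using hqab.symm.apply_right
  · have hq : (p * swap a b) z = p z := by simp [swap_apply_of_ne_of_ne hza hzb]
    exact hq ▸ (SameCycle.refl _ z).apply_right

theorem SameCycle.of_mul_swap (hab : ¬ p.SameCycle a b) (h : (p * swap a b).SameCycle x y)
    (hx : ¬ p.SameCycle x b) (hy : ¬ p.SameCycle y b) : p.SameCycle x y := by
  classical
  -- `p * swap a b` preserves the `p`-orbits once the orbit of `b` is merged into that of `a`.
  let g : β → β := fun z => if p.SameCycle z b then a else z
  suffices p.SameCycle (g x) (g y) by simpa [g, hx, hy] using this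
  refine h.rel_of_forall_rel_apply (R := fun u v => p.SameCycle (g u) (g v))
    ((SameCycle.equivalence p).comap g) fun z => ?_
  by_cases hza : z = a
  · subst hza
    simp [g, SameCycle.rfl]
  by_cases hzb : z = b
  · subst hzb
    simp [g, hab, sameCycle_comm, SameCycle.rfl]
  · have hq : (p * swap a b) z = p z := by simp [swap_apply_of_ne_of_ne hza hzb]
    by_cases hz : p.SameCycle z b <;> simp [g, hq, hz, SameCycle.rfl]

theorem card_orbits_eq_card_orbits_mul_swap_add_one [Finite β] (hab : ¬ p.SameCycle a b) :
    Nat.card (Quotient (orbitSetoid p)) =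
      Nat.card (Quotient (orbitSetoid (p * swap a b))) + 1 :=
  Setoid.card_quotient_eq_card_quotient_add_one (fun _ _ => SameCycle.mul_swap hab) hab
    (sameCycle_mul_swap_of_not_sameCycle hab) fun _ _ => SameCycle.of_mul_swap hab

end Swap

section Sigma

variable {ι : Type*} {β : ι → Type*} (f : ∀ k, Perm (β k))

@[simp]
theorem sigmaCongrRight_zpow_apply (z : ℤ) (k : ι) (x : β k) :
    (sigmaCongrRight f ^ z) ⟨k, x⟩ = ⟨k, (f k ^ z) x⟩ := by
  change (sigmaCongrRightHom β f ^ z) ⟨k, x⟩ = _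
  rw [← map_zpow]
  rfl

theorem SameCycle.fst_eq_of_sigmaCongrRight {x y : Σ k, β k}
    (h : (sigmaCongrRight f).SameCycle x y) : x.1 = y.1 := by
  obtain ⟨z, rfl⟩ := h
  rw [← Sigma.eta x, sigmaCongrRight_zpow_apply]

@[simp]
theorem sameCycle_sigmaCongrRight_mk {k : ι} {x y : β k} :
    (sigmaCongrRight f).SameCycle ⟨k, x⟩ ⟨k, y⟩ ↔ (f k).SameCycle x y := by
  simp [SameCycle]

def orbitsSigmaCongrRightEquiv :
    Quotient (orbitSetoid (sigmaCongrRight f)) ≃ Σ k, Quotient (orbitSetoid (f k)) where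
  toFun := Quotient.lift (fun x => ⟨x.1, ⟦x.2⟧⟩) <| by
    rintro ⟨k, x⟩ ⟨k', y⟩ h
    obtain rfl : k = k' := SameCycle.fst_eq_of_sigmaCongrRight f h
    exact congrArg (Sigma.mk k) (Quotient.sound ((sameCycle_sigmaCongrRight_mk f).1 h))
  invFun c := Quotient.lift (fun x => (⟦⟨c.1, x⟩⟧ : Quotient (orbitSetoid _)))
    (fun x y h => Quotient.sound ((sameCycle_sigmaCongrRight_mk f (x := x) (y := y)).2 h)) c.2
  left_inv c := by
    induction c using Quotient.ind
    rfl
  right_inv := by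
    rintro ⟨k, c⟩
    induction c using Quotient.ind
    rfl

end Sigma

end Equiv.Perm

section EraseChord

variable {β : Type*} [DecidableEq β] {α : Perm β} {i x : β}

def eraseChord (α : Perm β) (i : β) : Perm β :=
  α * swap i (α i)

theorem eraseChord_apply_self (hα : Involutive α) : eraseChord α i i = i := by
  simp [eraseChord, hα i]

@[simp]
theorem eraseChord_apply_apply_self : eraseChord α i (α i) = α i := by
  simp [eraseChord]

theorem eraseChord_apply_of_ne (h₁ : x ≠ i) (h₂ : x ≠ α i) : eraseChord α i x = α x := by
  simp [eraseChord, swap_apply_of_ne_of_ne h₁ h₂]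

theorem eraseChord_apply_eq_or (hα : Involutive α) (x : β) :
    eraseChord α i x = α x ∨ eraseChord α i x = x := by
  by_cases h₁ : x = i
  · exact .inr (h₁ ▸ eraseChord_apply_self hα)
  by_cases h₂ : x = α i
  · exact .inr (h₂ ▸ eraseChord_apply_apply_self)
  · exact .inl (eraseChord_apply_of_ne h₁ h₂)

theorem involutive_eraseChord (hα : Involutive α) : Involutive (eraseChord α i) := by
  intro x
  by_cases h₁ : x = i
  · rw [h₁, eraseChord_apply_self hα, eraseChord_apply_self hα]
  by_cases h₂ : x = α i
  · rw [h₂, eraseChord_apply_apply_self, eraseChord_apply_apply_self]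
  rw [eraseChord_apply_of_ne h₁ h₂, eraseChord_apply_of_ne, hα x]
  · exact fun h => h₂ (by rw [← h, hα])
  · exact fun h => h₁ (α.injective h)

theorem card_support_eraseChord [Fintype β] (hα : Involutive α) (hi : α i ≠ i) :
    #(eraseChord α i).support + 2 = #α.support := by
  have hdisj : (eraseChord α i).Disjoint (swap i (α i)) := by
    intro x
    by_cases h₁ : x = i
    · exact .inl (h₁ ▸ eraseChord_apply_self hα)
    by_cases h₂ : x = α i
    · exact .inl (h₂ ▸ eraseChord_apply_apply_self)
    · exact .inr (swap_apply_of_ne_of_ne h₁ h₂)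
  rw [← Perm.card_support_swap (Ne.symm hi), ← hdisj.card_support_mul, eraseChord,
    mul_swap_mul_self]

end EraseChord

variable {m : ℕ} {α : Perm (ZMod m)}

theorem loopPerm_mul_swap (i j : ZMod m) :
    loopPerm α * swap (i - 1) (j - 1) = loopPerm (α * swap i j) := by
  change α * Equiv.addRight 1 * _ = α * swap i j * Equiv.addRight 1
  rw [mul_assoc, mul_swap_eq_swap_mul, ← mul_assoc]
  simp

theorem NonCrossing.of_forall_apply_eq_or {α' : Perm (ZMod m)} (hα : NonCrossing α)
    (h : ∀ x, α' x = α x ∨ α' x = x) : NonCrossing α' := by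
  intro i j hji hji' hcross
  have hempty : ∀ z, ¬ CyclicBetween i i z := fun z hz => by
    simpa using hz.1.trans hz.2
  rcases h i with hi | hi
  · rcases h j with hj | hj
    · rw [hi] at hji'
      exact hα i j hji hji' (by rwa [ChordsCross, hi, hj] at hcross)
    · rw [ChordsCross, hj] at hcross
      exact cast (xor_self _) hcross
  · rw [ChordsCross, hi] at hcross
    exact (Xor.or hcross).elim (hempty _) (hempty _)

variable [NeZero m]

theorem NonCrossing.exists_shorter_chord (hα : NonCrossing α) (hinv : Involutive α)
    {i j : ZMod m} (hj : α j ≠ j) (hij : CyclicBetween i (α i) j) :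
    ∃ k, α k ≠ k ∧ (α k - k).val < (α i - i).val := by
  have hji : j ≠ i := by
    rintro rfl
    simpa using hij.1
  have hjαi : j ≠ α i := by
    rintro rfl
    exact lt_irrefl _ hij.2
  have hαj : CyclicBetween i (α i) (α j) := by
    by_contra h
    exact hα i j hji hjαi (Or.inl ⟨hij, h⟩)
  have huv : (j - i).val ≠ (α j - i).val := fun h =>
    hj (sub_left_injective (ZMod.val_injective m h)).symm
  rcases huv.lt_or_gt with h | h
  · refine ⟨j, hj, ?_⟩
    rw [show α j - j = (α j - i) - (j - i) by ring, ZMod.val_sub h.le]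
    exact (Nat.sub_le _ _).trans_lt hαj.2
  · refine ⟨α j, by rwa [hinv j, ne_comm], ?_⟩
    rw [hinv j, show j - α j = (j - i) - (α j - i) by ring, ZMod.val_sub h.le]
    exact (Nat.sub_le _ _).trans_lt hij.2

/-- A shortest chord has no chord endpoint strictly inside it. -/
theorem NonCrossing.exists_isolated_chord (hα : NonCrossing α) (hinv : Involutive α)
    (h1 : α ≠ 1) :
    ∃ i, α i ≠ i ∧ ∀ k : ℕ, 0 < k → k < (α i - i).val → α (i + k) = i + k := by
  obtain ⟨i, hi, hmin⟩ := α.support.exists_min_image (fun j => (α j - j).val)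
    (nonempty_iff_ne_empty.2 (Perm.support_eq_empty_iff.not.2 h1))
  refine ⟨i, Perm.mem_support.1 hi, fun k hk0 hkd => ?_⟩
  by_contra hk
  have hval : (i + k - i).val = k := by
    rw [add_sub_cancel_left, ZMod.val_cast_of_lt (hkd.trans (ZMod.val_lt _))]
  obtain ⟨j, hj, hlt⟩ := hα.exists_shorter_chord hinv hk
    ⟨by rwa [hval], by rwa [hval]⟩
  exact (hmin j (Perm.mem_support.2 hj)).not_gt hlt

/-- The arcs `i, …, α i - 1` beneath an isolated chord are closed under `loopPerm α`,
and the arc `i - 1` is not among them. -/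
theorem not_sameCycle_loopPerm_of_isolated (hinv : Involutive α) {i : ZMod m} (hi : α i ≠ i)
    (hiso : ∀ k : ℕ, 0 < k → k < (α i - i).val → α (i + k) = i + k) :
    ¬ (loopPerm α).SameCycle (i - 1) (α i - 1) := by
  set d := (α i - i).val with hd_def
  have hd : 0 < d := ZMod.val_pos.2 (sub_ne_zero.2 hi)
  have hdm : d < m := ZMod.val_lt _
  have hαi : i + (d : ZMod m) = α i := by rw [hd_def, ZMod.natCast_zmod_val]; ring
  let C : Set (ZMod m) := (fun k : ℕ => i + k) '' Set.Iio d
  have hC : Set.MapsTo (loopPerm α) C C := by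
    rintro _ ⟨k, hk, rfl⟩
    change α (i + k + 1) ∈ C
    rcases (Nat.succ_le_of_lt hk).lt_or_eq with hlt | heq
    · refine ⟨k + 1, hlt, ?_⟩
      rw [add_assoc, ← Nat.cast_succ, hiso _ k.succ_pos hlt]
    · refine ⟨0, hd, ?_⟩
      rw [add_assoc, ← Nat.cast_succ, heq, hαi, hinv]
      simp
  have hb : α i - 1 ∈ C := by
    refine ⟨d - 1, by simp [hd], ?_⟩
    change i + ((d - 1 : ℕ) : ZMod m) = α i - 1
    rw [Nat.cast_pred hd, ← hαi]
    ring
  have ha : i - 1 ∉ C := by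
    rintro ⟨k, hk, hki⟩
    have hdvd : m ∣ k + 1 := by
      rw [← ZMod.natCast_eq_zero_iff]
      push_cast
      linear_combination hki
    exact absurd (Nat.le_of_dvd k.succ_pos hdvd) (by simp at hk; omega)
  exact fun h => ha (h.symm.mem_of_mapsTo hC hb)

theorem card_orbits_loopPerm_one :
    Nat.card (Quotient (orbitSetoid (loopPerm (1 : Perm (ZMod m))))) = 1 := by
  have hpow : ∀ n : ℕ, (loopPerm (1 : Perm (ZMod m)) ^ n) 0 = n := by
    intro n
    induction n with
    | zero => simp
    | succ n ih =>
      rw [pow_succ', Perm.mul_apply, ih]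
      push_cast
      rfl
  have hall : ∀ x : ZMod m, (loopPerm 1).SameCycle 0 x := fun x =>
    ⟨x.val, by rw [zpow_natCast, hpow, ZMod.natCast_zmod_val]⟩
  rw [Nat.card_eq_one_iff_unique]
  refine ⟨⟨fun c c' => ?_⟩, ⟨⟦0⟧⟩⟩
  induction c using Quotient.ind
  induction c' using Quotient.ind
  exact Quotient.sound ((hall _).symm.trans (hall _))

theorem card_orbits_loopPerm (hinv : Involutive α) (hα : NonCrossing α) :
    Nat.card (Quotient (orbitSetoid (loopPerm α))) = #α.support / 2 + 1 := by
  induction hs : #α.support using Nat.strong_induction_on generalizing α with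
  | _ s ih =>
  by_cases h1 : α = 1
  · subst h1
    simp only [Perm.support_one, card_empty] at hs
    rw [card_orbits_loopPerm_one, ← hs]
  obtain ⟨i, hi, hiso⟩ := hα.exists_isolated_chord hinv h1
  have hcard := card_support_eraseChord hinv hi
  calc Nat.card (Quotient (orbitSetoid (loopPerm α)))
      = Nat.card (Quotient (orbitSetoid (loopPerm (eraseChord α i)))) + 1 := by
        rw [Perm.card_orbits_eq_card_orbits_mul_swap_add_one
          (not_sameCycle_loopPerm_of_isolated hinv hi hiso), loopPerm_mul_swap]
        rfl
    _ = s / 2 + 1 := by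
        rw [ih _ (by omega) (involutive_eraseChord hinv)
          (hα.of_forall_apply_eq_or (eraseChord_apply_eq_or hinv)) rfl]
        omega

theorem planar_chord_diagram_multi_loop_count_general
    (l : ℕ) (n : Fin l → ℕ) (hn : ∀ k, 1 ≤ n k)
    (α : ∀ k, Equiv.Perm (ZMod (2 * n k)))
    (hinv : ∀ k i, α k (α k i) = i) (hfree : ∀ k i, α k i ≠ i)
    (hplanar : ∀ k, NonCrossing (α k)) :
    Nat.card (Quotient (orbitSetoid
      (Equiv.sigmaCongrRight fun k => loopPerm (α k)))) = l + ∑ k, n k := by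
  have (k : Fin l) : NeZero (2 * n k) := ⟨by have := hn k; omega⟩
  have hcircle (k : Fin l) : Nat.card (Quotient (orbitSetoid (loopPerm (α k)))) = n k + 1 := by
    have hsupp : (α k).support = univ := eq_univ_of_forall fun i => Perm.mem_support.2 (hfree k i)
    rw [card_orbits_loopPerm (hinv k) (hplanar k), hsupp, card_univ, ZMod.card]
    omega
  rw [Nat.card_congr (Perm.orbitsSigmaCongrRightEquiv _), Nat.card_sigma]
  simp [hcircle, sum_add_distrib, add_comm]

/-- A planar chord diagram on `l ≥ 1` circles with `n k ≥ 1` chords on the `k`-th circle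
(a disjoint union of planar one-circle diagrams) has exactly `l + ∑ k, n k` planar loops:
the permutation of the disjoint union acting on the `k`-th summand by `j ↦ α k (j + 1)`
has exactly `l + ∑ k, n k` orbits. -/
theorem planar_chord_diagram_multi_loop_count
    (l : ℕ) (hl : 1 ≤ l) (n : Fin l → ℕ) (hn : ∀ k, 1 ≤ n k)
    (α : ∀ k, Equiv.Perm (ZMod (2 * n k)))
    (hinv : ∀ k i, α k (α k i) = i) (hfree : ∀ k i, α k i ≠ i)
    (hplanar : ∀ k, NonCrossing (α k)) :
    Nat.card (Quotient (orbitSetoid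
      (Equiv.sigmaCongrRight fun k => loopPerm (α k)))) = l + ∑ k, n k :=
  planar_chord_diagram_multi_loop_count_general l n hn α hinv hfree hplanar
end

section
/- Let n ≥ 1 and let α be a fixed-point-free involution of ZMod (2n) that is non-crossing, and let p be the permutation of ZMod (2n) defined by p j = α (j + 1). Then for every i ∈ ZMod (2n), the p-orbit of i and the p-orbit of α i are distinct. (Equivalently: the two planar loops adjacent to any chord of a planar chord diagram are different, which is implicitly used in the paper's definition of the chord move and in the proof that the dual graph is a tree.) -/
/-- The two planar loops adjacent to any chord of a planar chord diagram are different: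
for every `i`, the `p`-orbit of `i` and the `p`-orbit of `α i` are distinct, where
`p j = α (j + 1)`. -/
theorem chord_adjacent_loops_distinct
    (n : ℕ) (hn : 1 ≤ n) (α : Equiv.Perm (ZMod (2 * n)))
    (hinv : ∀ i, α (α i) = i) (hfree : ∀ i, α i ≠ i)
    (hplanar : NonCrossing α) :
    ∀ i : ZMod (2 * n),
      Quotient.mk (orbitSetoid (loopPerm α)) i ≠
        Quotient.mk (orbitSetoid (loopPerm α)) (α i) := by
  intro i h
  have hm : 1 < 2 * n := by omega
  haveI : Fact (1 < 2 * n) := ⟨hm⟩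
  haveI : NeZero (2 * n) := ⟨by omega⟩
  have hsc : (loopPerm α).SameCycle i (α i) := Quotient.exact h
  obtain ⟨k, -, hk⟩ := hsc.exists_pow_eq'
  set p := loopPerm α with hp
  have hpdef : ∀ j, p j = α (j + 1) := fun j => rfl
  -- comparing distances from `i`
  have hvi : ∀ x y : ZMod (2 * n), (x - i).val = (y - i).val → x = y := by
    intro x y hxy
    have := ZMod.val_injective (2 * n) hxy
    exact by linear_combination this
  have hd0 : (α i - i).val ≠ 0 := by
    intro h0
    exact hfree i (hvi _ _ (by simpa using h0))
  -- the invariant set: `i` together with the open cyclic interval `(i, α i)`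
  set S : ZMod (2 * n) → Prop := fun j => j = i ∨ CyclicBetween i (α i) j with hS
  have hstep : ∀ j, S j → S (p j) := by
    intro j hj
    have key : ∀ x : ZMod (2 * n), x ≠ i → x ≠ α i → CyclicBetween i (α i) x →
        CyclicBetween i (α i) (α x) := by
      intro x hx1 hx2 hx3
      by_contra hc
      exact hplanar i x hx1 hx2 (Or.inl ⟨hx3, hc⟩)
    rcases hj with rfl | hj
    · -- j = i
      rw [hpdef]
      by_cases hia : j + 1 = α j
      · left; rw [hia, hinv]
      · right
        have h1 : (j + 1 - j).val = 1 := by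
          simp [ZMod.val_one]
        have hne01 : (α j - j).val ≠ 1 := fun hv => hia (hvi _ _ (h1.trans hv.symm))
        have hbet : CyclicBetween j (α j) (j + 1) := ⟨by omega, by omega⟩
        have hne1 : j + 1 ≠ j := by
          intro he
          have : (j + 1 - j).val = 0 := by rw [he]; simp
          omega
        exact key _ hne1 hia hbet
    · -- j strictly between i and α i
      rw [hpdef]
      by_cases hia : j + 1 = α i
      · left; rw [hia, hinv]
      · right
        obtain ⟨hj1, hj2⟩ := hj
        have hlt : (j - i).val + 1 < 2 * n := by
          have := ZMod.val_lt (α i - i)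
          omega
        have hsucc : (j + 1 - i).val = (j - i).val + 1 := by
          have : j + 1 - i = (j - i) + 1 := by ring
          rw [this, ZMod.val_add_of_lt (by rw [ZMod.val_one]; omega), ZMod.val_one]
        have hne : (j + 1 - i).val ≠ (α i - i).val := fun he => hia (hvi _ _ he)
        have hbet : CyclicBetween i (α i) (j + 1) := ⟨by omega, by omega⟩
        have hnei : j + 1 ≠ i := by
          intro he
          have : (j + 1 - i).val = 0 := by rw [he]; simp
          omega
        exact key _ hnei hia hbet
  have horb : ∀ k : ℕ, S ((p ^ k) i) := by
    intro k
    induction k with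
    | zero => exact Or.inl rfl
    | succ k ih => rw [pow_succ', Equiv.Perm.mul_apply]; exact hstep _ ih
  have := horb k
  rw [hk] at this
  rcases this with he | ⟨_, hlt⟩
  · exact hfree i he
  · omega
end

section
/- Let n ≥ 1 and let α be a fixed-point-free involution of ZMod (2n) that is non-crossing, and let p be the permutation of ZMod (2n) defined by p j = α (j + 1). Then the simple graph whose vertex set is the set of orbits of p, and in which two distinct orbits O and O' are adjacent if and only if there exists i ∈ ZMod (2n) with i ∈ O and α i ∈ O', is a tree. (This is the paper's assertion, used in the proof of its chord-move lemma, that a connected planar chord diagram is dual to a tree whose vertices are the planar loops and whose edges are the chords.) -/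
/-- The dual graph of the chord diagram: vertices are the orbits of the loop
permutation `p j = α (j + 1)` (the planar loops), and two distinct orbits `O`, `O'`
are adjacent if and only if there is `i` with `i ∈ O` and `α i ∈ O'`
(symmetry of this relation follows since `α` is an involution). -/
def dualGraph {m : ℕ} (α : Equiv.Perm (ZMod m)) (hinv : ∀ i, α (α i) = i) :
    SimpleGraph (Quotient (orbitSetoid (loopPerm α))) where
  Adj O O' := O ≠ O' ∧ ∃ i : ZMod m,
    Quotient.mk (orbitSetoid (loopPerm α)) i = O ∧
      Quotient.mk (orbitSetoid (loopPerm α)) (α i) = O'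
  symm := by
    constructor
    rintro O O' ⟨hne, i, h1, h2⟩
    refine ⟨hne.symm, α i, h2, ?_⟩
    rw [hinv]
    exact h1
  loopless := by
    constructor
    rintro O ⟨hne, -⟩
    exact hne rfl

open Equiv

theorem Equiv.Perm.SameCycle.iff_of_forall_apply_iff {β : Type*} {p : Perm β} {P : β → Prop}
    (hP : ∀ x, P (p x) ↔ P x) {x y : β} (h : p.SameCycle x y) : P x ↔ P y := by
  obtain ⟨k, rfl⟩ := h
  induction k using Int.induction_on with
  | zero => rfl
  | succ k ih => rw [add_comm, zpow_add, zpow_one, Perm.mul_apply, hP, ih]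
  | pred k ih =>
    rw [sub_eq_neg_add, zpow_add, zpow_neg_one, Perm.mul_apply, ih]
    simpa using hP (p⁻¹ ((p ^ (-(k : ℤ))) x))

namespace ZMod

variable {m : ℕ} [NeZero m]

lemma add_one_eq_zero_iff_val_add_one_eq {t : ZMod m} : t + 1 = 0 ↔ t.val + 1 = m := by
  have ht := t.val_lt
  conv_lhs => rw [← natCast_zmod_val t, ← Nat.cast_add_one, natCast_eq_zero_iff]
  exact ⟨fun h => le_antisymm ht (Nat.le_of_dvd t.val.succ_pos h), fun h => by rw [h]⟩

lemma val_add_one_of_ne_zero {t : ZMod m} (h : t + 1 ≠ 0) : (t + 1).val = t.val + 1 := by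
  have hlt : t.val + 1 < m :=
    lt_of_le_of_ne t.val_lt (add_one_eq_zero_iff_val_add_one_eq.not.mp h)
  rw [val_add_of_lt (by rwa [val_one'' (by omega)]), val_one'' (by omega)]

end ZMod

/-- The half-open cyclic interval `[a, b)`: read as arc labels, the arcs `a, a + 1, …, b - 1`. -/
def CyclicIco {m : ℕ} (a b x : ZMod m) : Prop :=
  (x - a).val < (b - a).val

section CyclicIco

variable {m : ℕ} {a b x : ZMod m}

lemma cyclicIco_left (h : b ≠ a) : CyclicIco a b a := by
  rwa [CyclicIco, sub_self, ZMod.val_zero, ZMod.val_pos, sub_ne_zero]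

lemma not_cyclicIco_right : ¬ CyclicIco a b b :=
  lt_irrefl _

lemma cyclicIco_iff_cyclicBetween (hx : x ≠ a) : CyclicIco a b x ↔ CyclicBetween a b x := by
  rw [CyclicBetween, ZMod.val_pos, sub_ne_zero]
  exact (and_iff_right hx).symm

variable [NeZero m]

lemma cyclicIco_add_one_iff (ha : x + 1 ≠ a) (hb : x + 1 ≠ b) :
    CyclicIco a b (x + 1) ↔ CyclicIco a b x := by
  have hsucc : (x + 1 - a).val = (x - a).val + 1 := by
    rw [← sub_add_eq_add_sub,
      ZMod.val_add_one_of_ne_zero (by rwa [sub_add_eq_add_sub, sub_ne_zero])]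
  have hne : (x + 1 - a).val ≠ (b - a).val := (ZMod.val_injective m).ne (sub_left_injective.ne hb)
  rw [CyclicIco, CyclicIco]
  omega

lemma cyclicIco_of_add_one_eq_right (hab : b ≠ a) (h : x + 1 = b) : CyclicIco a b x := by
  have hsucc : (b - a).val = (x - a).val + 1 := by
    rw [← h, ← sub_add_eq_add_sub,
      ZMod.val_add_one_of_ne_zero (by rwa [sub_add_eq_add_sub, h, sub_ne_zero])]
  rw [CyclicIco, hsucc]
  exact Nat.lt_succ_self _

lemma not_cyclicIco_of_add_one_eq_left (h : x + 1 = a) : ¬ CyclicIco a b x := by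
  have hpred : (x - a).val + 1 = m :=
    ZMod.add_one_eq_zero_iff_val_add_one_eq.mp (by rw [sub_add_eq_add_sub, h, sub_self])
  have := (b - a).val_lt
  rw [CyclicIco]
  omega

end CyclicIco

section NonCrossing

variable {m : ℕ} {α : Perm (ZMod m)}

lemma NonCrossing.cyclicIco_apply_iff (hα : NonCrossing α) (hinv : ∀ i, α (α i) = i)
    {i j : ZMod m} (hji : j ≠ i) (hjαi : j ≠ α i) :
    CyclicIco i (α i) (α j) ↔ CyclicIco i (α i) j := by
  have hαj : α j ≠ i := fun h => hjαi (by rw [← h, hinv])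
  rw [cyclicIco_iff_cyclicBetween hji, cyclicIco_iff_cyclicBetween hαj]
  exact (not_xor _ _).mp (hα i j hji hjαi) |>.symm

lemma NonCrossing.cyclicIco_loopPerm_iff [NeZero m] (hα : NonCrossing α)
    (hinv : ∀ i, α (α i) = i) {i : ZMod m} (hi : α i ≠ i) (x : ZMod m) :
    CyclicIco i (α i) (loopPerm α x) ↔ CyclicIco i (α i) x := by
  change CyclicIco i (α i) (α (x + 1)) ↔ _
  by_cases hxαi : x + 1 = α i
  · rw [hxαi, hinv]
    exact iff_of_true (cyclicIco_left hi) (cyclicIco_of_add_one_eq_right hi hxαi)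
  by_cases hxi : x + 1 = i
  · rw [hxi]
    exact iff_of_false not_cyclicIco_right (not_cyclicIco_of_add_one_eq_left hxi)
  rw [hα.cyclicIco_apply_iff hinv hxi hxαi, cyclicIco_add_one_iff hxi hxαi]

end NonCrossing

namespace SimpleGraph

variable {V : Type*} {G : SimpleGraph V}

lemma Reachable.iff_of_forall_adj {P : V → Prop} (hP : ∀ x y, G.Adj x y → (P x ↔ P y))
    {u v : V} (h : G.Reachable u v) : P u ↔ P v := by
  rw [reachable_iff_reflTransGen] at h
  induction h with
  | refl => rfl
  | tail _ hxy ih => exact ih.trans (hP _ _ hxy)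

lemma isBridge_of_forall_adj_iff {v w : V} (P : V → Prop) (hvw : ¬ (P v ↔ P w))
    (hP : ∀ x y, G.Adj x y → s(x, y) ≠ s(v, w) → (P x ↔ P y)) : G.IsBridge s(v, w) := by
  refine isBridge_iff.mpr fun h => hvw (h.iff_of_forall_adj fun x y hxy => ?_)
  rw [deleteEdges_adj, Set.mem_singleton_iff] at hxy
  exact hP x y hxy.1 hxy.2

end SimpleGraph

section DualGraph

open SimpleGraph

variable {m : ℕ} {α : Perm (ZMod m)} (hinv : ∀ i, α (α i) = i)

lemma dualGraph_reachable_apply (i : ZMod m) :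
    (dualGraph α hinv).Reachable (Quotient.mk (orbitSetoid (loopPerm α)) i)
      (Quotient.mk (orbitSetoid (loopPerm α)) (α i)) := by
  by_cases h : Quotient.mk (orbitSetoid (loopPerm α)) i =
      Quotient.mk (orbitSetoid (loopPerm α)) (α i)
  · rw [h]
  · exact Adj.reachable ⟨h, i, rfl, rfl⟩

lemma dualGraph_reachable_add_one (x : ZMod m) :
    (dualGraph α hinv).Reachable (Quotient.mk (orbitSetoid (loopPerm α)) x)
      (Quotient.mk (orbitSetoid (loopPerm α)) (x + 1)) := by
  have hx : Quotient.mk (orbitSetoid (loopPerm α)) x =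
      Quotient.mk (orbitSetoid (loopPerm α)) (α (x + 1)) :=
    Quotient.sound (Perm.sameCycle_apply_right.mpr (Perm.SameCycle.refl _ x))
  rw [hx]
  exact (dualGraph_reachable_apply hinv (x + 1)).symm

theorem dualGraph_connected : (dualGraph α hinv).Connected := by
  have hreach (z : ℤ) : (dualGraph α hinv).Reachable (Quotient.mk (orbitSetoid (loopPerm α)) 0)
      (Quotient.mk (orbitSetoid (loopPerm α)) (z : ZMod m)) := by
    induction z using Int.induction_on with
    | zero => rw [Int.cast_zero]
    | succ k ih => exact ih.trans (by push_cast; exact dualGraph_reachable_add_one hinv _)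
    | pred k ih =>
      refine ih.trans ?_
      simpa using (dualGraph_reachable_add_one hinv ((-(k : ℤ) - 1 : ℤ) : ZMod m)).symm
  refine (connected_iff_exists_forall_reachable _).mpr ⟨Quotient.mk _ 0, fun O => ?_⟩
  induction O using Quotient.ind with
  | _ x => simpa using hreach (ZMod.cast x)

theorem dualGraph_isAcyclic [NeZero m] (hα : NonCrossing α) : (dualGraph α hinv).IsAcyclic := by
  rw [isAcyclic_iff_forall_adj_isBridge]
  rintro _ _ ⟨hne, i, rfl, rfl⟩
  have hi : α i ≠ i := fun h => hne (by rw [h])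
  have hside (x y : ZMod m) (h : (loopPerm α).SameCycle x y) :
      CyclicIco i (α i) x ↔ CyclicIco i (α i) y :=
    h.iff_of_forall_apply_iff (hα.cyclicIco_loopPerm_iff hinv hi)
  refine isBridge_of_forall_adj_iff
    (Quotient.lift (CyclicIco i (α i)) fun x y h => propext (hside x y h)) ?_ ?_
  · exact fun h => not_cyclicIco_right (h.mp (cyclicIco_left hi))
  · rintro _ _ ⟨-, j, rfl, rfl⟩ hj
    have hji : j ≠ i := by rintro rfl; exact hj rfl
    have hjαi : j ≠ α i := by rintro rfl; exact hj (by rw [hinv]; exact Sym2.eq_swap)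
    exact (hα.cyclicIco_apply_iff hinv hji hjαi).symm

end DualGraph

theorem dualGraph_isTree_general
    (n : ℕ) (hn : 1 ≤ n) (α : Equiv.Perm (ZMod (2 * n)))
    (hinv : ∀ i, α (α i) = i)
    (hplanar : NonCrossing α) :
    (dualGraph α hinv).IsTree := by
  have : NeZero (2 * n) := ⟨by omega⟩
  exact ⟨dualGraph_connected hinv, dualGraph_isAcyclic hinv hplanar⟩

/-- A connected planar chord diagram is dual to a tree: the simple graph whose vertices
are the planar loops (orbits of `p j = α (j + 1)`) and whose edges are given by the
chords is a tree. -/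
theorem dualGraph_isTree
    (n : ℕ) (hn : 1 ≤ n) (α : Equiv.Perm (ZMod (2 * n)))
    (hinv : ∀ i, α (α i) = i) (hfree : ∀ i, α i ≠ i)
    (hplanar : NonCrossing α) :
    (dualGraph α hinv).IsTree :=
  dualGraph_isTree_general n hn α hinv hplanar
end

section
/- Let n ≥ 1 and let α be a fixed-point-free involution of ZMod (2n) that is non-crossing. Then any two Hopf markings of the diagram are connected by a finite sequence of chord moves and inverse chord moves; that is, the equivalence relation generated by the chord moves at all chords is the total relation on the set of Hopf markings. (This is the combinatorial content of the paper's lemma that any two Hopf triples on the same planar chord diagram can be linked with a sequence of chord moves.) -/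
/-- A Hopf marking of the planar chord diagram: a choice, for each planar loop
(orbit `O` of the permutation `p j = α (j + 1)`), of an arc `f O` belonging to `O`. -/
def IsHopfMarking {m : ℕ} (α : Equiv.Perm (ZMod m))
    (f : Quotient (orbitSetoid (loopPerm α)) → ZMod m) : Prop :=
  ∀ O, Quotient.mk (orbitSetoid (loopPerm α)) (f O) = O

/-- The chord move at the chord `{i, α i}`: with `O₁` the `p`-orbit of `i` and `O₂`
the `p`-orbit of `α i`, it relates markings `f` and `g` such that `f O₁ = i`,
`f O₂ = α i`, `g O₁ = α i - 1`, `g O₂ = i - 1`, and `f` and `g` agree on all other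
orbits.  This encodes moving the two marked points sitting at the endpoints of the
chord both in the positive (resp. both in the negative) direction along the circle. -/
def ChordMove {m : ℕ} (α : Equiv.Perm (ZMod m)) (i : ZMod m)
    (f g : Quotient (orbitSetoid (loopPerm α)) → ZMod m) : Prop :=
  f (Quotient.mk (orbitSetoid (loopPerm α)) i) = i ∧
  f (Quotient.mk (orbitSetoid (loopPerm α)) (α i)) = α i ∧
  g (Quotient.mk (orbitSetoid (loopPerm α)) i) = α i - 1 ∧
  g (Quotient.mk (orbitSetoid (loopPerm α)) (α i)) = i - 1 ∧
  ∀ O, O ≠ Quotient.mk (orbitSetoid (loopPerm α)) i →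
    O ≠ Quotient.mk (orbitSetoid (loopPerm α)) (α i) → f O = g O

set_option linter.unusedSectionVars false

def MoveRel {m : ℕ} (α : Equiv.Perm (ZMod m))
    (a b : Quotient (orbitSetoid (loopPerm α)) → ZMod m) : Prop :=
  IsHopfMarking α a ∧ IsHopfMarking α b ∧ ∃ i, ChordMove α i a b

lemma zmod_cast_val {m : ℕ} [NeZero m] (a : ZMod m) : ((a.val : ℕ) : ZMod m) = a :=
  ZMod.natCast_rightInverse a

lemma val_pos_of_ne {m : ℕ} [NeZero m] {a : ZMod m} (h : a ≠ 0) : 0 < a.val := by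
  rcases Nat.eq_zero_or_pos a.val with h0 | h0
  · exact absurd (by rw [← zmod_cast_val a, h0]; simp) h
  · exact h0

lemma eq_of_val_eq' {m : ℕ} [NeZero m] {a : ZMod m} {k : ℕ} (h : a.val = k) :
    a = (k : ZMod m) := by rw [← h, zmod_cast_val]

lemma zmod_sub_val {m : ℕ} [NeZero m] (a b : ZMod m) :
    (a - b).val = if b.val ≤ a.val then a.val - b.val else a.val + m - b.val := by
  have hm : 0 < m := NeZero.pos m
  have ha := ZMod.val_lt a
  have hb := ZMod.val_lt b
  rw [sub_eq_add_neg, ZMod.val_add, ZMod.neg_val]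
  by_cases hb0 : b = 0
  · subst hb0
    simp [Nat.mod_eq_of_lt ha, ZMod.val_zero]
  · rw [if_neg hb0]
    rcases le_or_gt b.val a.val with h | h
    · rw [if_pos h]
      have : a.val + (m - b.val) = (a.val - b.val) + m := by omega
      rw [this, Nat.add_mod_right, Nat.mod_eq_of_lt (by omega)]
    · rw [if_neg (by omega)]
      have hbpos : 0 < b.val := val_pos_of_ne hb0
      rw [Nat.mod_eq_of_lt (by omega)]
      omega

lemma cyclicBetween_iff {m : ℕ} [NeZero m] (a b j : ZMod m) :
    CyclicBetween a b j ↔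
      ((a.val < j.val ∧ j.val < b.val) ∨ (j.val < b.val ∧ b.val < a.val) ∨
        (b.val < a.val ∧ a.val < j.val)) := by
  unfold CyclicBetween
  rw [zmod_sub_val, zmod_sub_val]
  have ha := ZMod.val_lt a
  have hb := ZMod.val_lt b
  have hj := ZMod.val_lt j
  split_ifs <;> omega

lemma ear_exists {m : ℕ} [NeZero m] (hm : 2 ≤ m) (α : Equiv.Perm (ZMod m))
    (hfree : ∀ i, α i ≠ i) (hplanar : NonCrossing α) :
    ∃ i, α i = i + 1 := by
  obtain ⟨i, -, hmin⟩ := Finset.exists_min_image (Finset.univ : Finset (ZMod m))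
    (fun x => (α x - x).val) ⟨0, Finset.mem_univ 0⟩
  refine ⟨i, ?_⟩
  have hd1 : 0 < (α i - i).val := val_pos_of_ne (sub_ne_zero.mpr (hfree i))
  by_cases h1 : (α i - i).val = 1
  · have h2 : α i - i = (1 : ZMod m) := by
      have := eq_of_val_eq' h1; simpa using this
    linear_combination (norm := ring_nf) h2
  · exfalso
    have hd2 : 2 ≤ (α i - i).val := by omega
    set j := i + 1 with hj
    have hji : j ≠ i := by
      intro h
      have h3 : (1 : ZMod m) = 0 := by
        have := sub_eq_zero.mpr h
        simpa [hj] using this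
      have h4 : (1 : ZMod m).val = 0 := by rw [h3]; simp
      rw [ZMod.val_one_eq_one_mod, Nat.mod_eq_of_lt hm] at h4
      omega
    have hjai : j ≠ α i := by
      intro h
      apply h1
      rw [← h, hj]
      simp [ZMod.val_one_eq_one_mod, Nat.mod_eq_of_lt hm]
    have hbj : CyclicBetween i (α i) j := by
      constructor
      · have h5 : j - i = 1 := by ring
        rw [h5, ZMod.val_one_eq_one_mod, Nat.mod_eq_of_lt hm]; omega
      · have h5 : j - i = 1 := by ring
        rw [h5, ZMod.val_one_eq_one_mod, Nat.mod_eq_of_lt hm]; omega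
    have hbaj : CyclicBetween i (α i) (α j) := by
      by_contra hq
      exact hplanar i j hji hjai (Or.inl ⟨hbj, hq⟩)
    obtain ⟨hs1, hs2⟩ := hbaj
    set s := (α j - i).val with hs
    have hsne1 : s ≠ 1 := by
      intro h
      apply hfree j
      have h6 : α j - i = (1 : ZMod m) := by
        have := eq_of_val_eq' (hs ▸ h); simpa using this
      have h7 : α j = i + 1 := by linear_combination (norm := ring_nf) h6
      rw [h7, hj]
    have hdj : (α j - j).val = s - 1 := by
      have hlt : s < m := ZMod.val_lt _
      have h8 : α j - j = ((s - 1 : ℕ) : ZMod m) := by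
        have h9 : α j - i = (s : ZMod m) := eq_of_val_eq' rfl
        have h10 : α j - j = (α j - i) - 1 := by rw [hj]; ring
        rw [h10, h9]
        rw [Nat.cast_sub (by omega : 1 ≤ s), Nat.cast_one]
      rw [h8, ZMod.val_natCast, Nat.mod_eq_of_lt (by omega)]
    have := hmin j (Finset.mem_univ j)
    omega

section Transfer
variable {N : ℕ} [NeZero N]

/-- the order embedding of the small circle into the big circle, starting just after the ear -/
def phi (i : ZMod (N+2)) (x : ZMod N) : ZMod (N+2) := (x.val : ZMod (N+2)) + i + 2

def psi (i : ZMod (N+2)) (y : ZMod (N+2)) : ZMod N := (((y - i - 2).val : ℕ) : ZMod N)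

variable (hN : 2 ≤ N) (i : ZMod (N+2))

lemma natN_eq : ((N : ℕ) : ZMod (N+2)) = -2 := by
  have : ((N : ℕ) : ZMod (N+2)) + 2 = 0 := by
    have : (((N+2 : ℕ)) : ZMod (N+2)) = 0 := ZMod.natCast_self _
    push_cast at this ⊢
    linear_combination this
  linear_combination this

include hN in
lemma natN1_eq : (((N-1 : ℕ)) : ZMod (N+2)) = -3 := by
  have h1 : ((N - 1 : ℕ) : ZMod (N+2)) + 3 = 0 := by
    have h2 : ((N - 1) + 3 : ℕ) = N + 2 := by omega
    have : (((N-1) + 3 : ℕ) : ZMod (N+2)) = 0 := by rw [h2]; exact ZMod.natCast_self _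
    push_cast at this
    linear_combination this
  linear_combination h1

lemma phi_sub_val (x : ZMod N) : ((phi i x) - i - 2).val = x.val := by
  have : phi i x - i - 2 = ((x.val : ℕ) : ZMod (N+2)) := by unfold phi; ring
  rw [this, ZMod.val_natCast, Nat.mod_eq_of_lt (by have := ZMod.val_lt x; omega)]

lemma psi_phi (x : ZMod N) : psi i (phi i x) = x := by
  unfold psi
  rw [phi_sub_val, zmod_cast_val]

lemma phi_inj : Function.Injective (phi i) := by
  intro a b h
  have := congrArg (psi i) h
  rwa [psi_phi, psi_phi] at this

lemma phi_ne_i (x : ZMod N) : phi i x ≠ i := by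
  intro h
  have h2 : (phi i x - i - 2) = (-2 : ZMod (N+2)) := by rw [h]; ring
  have := phi_sub_val i x
  rw [h2, ← natN_eq, ZMod.val_natCast, Nat.mod_eq_of_lt (by omega)] at this
  have := ZMod.val_lt x
  omega

lemma phi_ne_i1 (x : ZMod N) : phi i x ≠ i + 1 := by
  intro h
  have h2 : (phi i x - i - 2) = (-1 : ZMod (N+2)) := by rw [h]; ring
  have := phi_sub_val i x
  have hval : ((-1 : ZMod (N+2))).val = N + 1 := by
    rw [ZMod.neg_val]
    simp only [ZMod.val_one_eq_one_mod]
    rw [if_neg (by intro h; have := congrArg ZMod.val h; simp [ZMod.val_one_eq_one_mod, Nat.mod_eq_of_lt (show 1 < N+2 by omega)] at this), Nat.mod_eq_of_lt (by omega)]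
    omega
  rw [h2, hval] at this
  have := ZMod.val_lt x
  omega

include hN in
lemma phi_psi (y : ZMod (N+2)) (h1 : y ≠ i) (h2 : y ≠ i + 1) : phi i (psi i y) = y := by
  have hvlt : (y - i - 2).val < N := by
    have hlt : (y - i - 2).val < N + 2 := ZMod.val_lt _
    have hne1 : (y - i - 2).val ≠ N + 1 := by
      intro h
      apply h2
      have := eq_of_val_eq' h
      have hcast : ((N + 1 : ℕ) : ZMod (N+2)) = -1 := by
        push_cast
        rw [natN_eq]; ring
      rw [hcast] at this
      linear_combination this
    have hne2 : (y - i - 2).val ≠ N := by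
      intro h
      apply h1
      have := eq_of_val_eq' h
      rw [natN_eq] at this
      linear_combination this
    omega
  unfold phi psi
  rw [ZMod.val_natCast, Nat.mod_eq_of_lt hvlt]
  rw [zmod_cast_val]
  ring

lemma phi_zero : phi i 0 = i + 2 := by unfold phi; simp

include hN in
lemma val_one_small : (1 : ZMod N).val = 1 := by
  rw [ZMod.val_one_eq_one_mod, Nat.mod_eq_of_lt (by omega)]

include hN in
lemma phi_succ (x : ZMod N) (h : x.val ≠ N - 1) : phi i (x + 1) = phi i x + 1 := by
  have hx := ZMod.val_lt x
  have hadd : (x + 1).val = x.val + 1 := by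
    rw [ZMod.val_add, val_one_small hN, Nat.mod_eq_of_lt (by omega)]
  unfold phi
  rw [hadd]
  push_cast
  ring

include hN in
lemma phi_last (x : ZMod N) (h : x.val = N - 1) : phi i x = i - 1 := by
  unfold phi
  rw [h, natN1_eq hN]
  ring

include hN in
lemma last_add_one (x : ZMod N) (h : x.val = N - 1) : x + 1 = 0 := by
  have := eq_of_val_eq' h
  rw [this]
  have : (((N-1) + 1 : ℕ) : ZMod N) = 0 := by
    rw [(by omega : (N-1) + 1 = N)]; exact ZMod.natCast_self _
  push_cast at this
  linear_combination this

include hN in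
lemma one_ne_zero_small : (1 : ZMod N) ≠ 0 := by
  intro h
  have := congrArg ZMod.val h
  rw [val_one_small hN, ZMod.val_zero] at this
  omega

include hN in
lemma neg_one_val_small : ((0 : ZMod N) - 1).val = N - 1 := by
  have : (0 : ZMod N) - 1 = -1 := by ring
  rw [this, ZMod.neg_val, if_neg (one_ne_zero_small hN), val_one_small hN]

-- 
variable (α : Equiv.Perm (ZMod (N+2))) (hinv : ∀ x, α (α x) = x)
  (hfree : ∀ x, α x ≠ x) (hear : α i = i + 1)

include hinv hear in
lemma aphi_ne_i (x : ZMod N) : α (phi i x) ≠ i := by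
  intro h
  have := congrArg α h
  rw [hinv, hear] at this
  exact phi_ne_i1 i x this

include hear in
lemma aphi_ne_i1 (x : ZMod N) : α (phi i x) ≠ i + 1 := by
  intro h
  rw [← hear] at h
  exact phi_ne_i i x (α.injective h)

include hN hinv hear in
lemma alphaSmall_invol : Function.Involutive (fun x : ZMod N => psi i (α (phi i x))) := by
  intro x
  simp only
  rw [phi_psi hN i _ (aphi_ne_i i α hinv hear x) (aphi_ne_i1 i α hear x), hinv, psi_phi]

variable (α' : Equiv.Perm (ZMod N)) (hα' : ∀ x, α' x = psi i (α (phi i x)))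

include hN hα' hinv hear in
lemma phi_alpha' (x : ZMod N) : phi i (α' x) = α (phi i x) := by
  rw [hα']
  exact phi_psi hN i _ (aphi_ne_i i α hinv hear x) (aphi_ne_i1 i α hear x)

include hN hα' hinv hear hfree in
lemma alpha'_fpf (x : ZMod N) : α' x ≠ x := by
  intro h
  have := congrArg (phi i) h
  rw [phi_alpha' hN i α hinv hear α' hα'] at this
  exact hfree _ this

include hN hα' hinv hear in
lemma alpha'_inv (x : ZMod N) : α' (α' x) = x := by
  apply phi_inj i
  rw [phi_alpha' hN i α hinv hear α' hα', phi_alpha' hN i α hinv hear α' hα', hinv]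

lemma cb_shift {M : ℕ} (c x y z : ZMod M) :
    CyclicBetween (x - c) (y - c) (z - c) ↔ CyclicBetween x y z := by
  unfold CyclicBetween
  rw [sub_sub_sub_cancel_right, sub_sub_sub_cancel_right]

lemma cb_phi (a b j : ZMod N) :
    CyclicBetween a b j ↔ CyclicBetween (phi i a) (phi i b) (phi i j) := by
  rw [← cb_shift (i + 2) (phi i a) (phi i b) (phi i j)]
  rw [cyclicBetween_iff, cyclicBetween_iff]
  have h : ∀ x : ZMod N, (phi i x - (i + 2)).val = x.val := by
    intro x
    rw [sub_add_eq_sub_sub]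
    exact phi_sub_val i x
  rw [h, h, h]

include hN hα' hinv hear in
lemma noncrossing' (hplanar : NonCrossing α) : NonCrossing α' := by
  intro x y hyx hyax
  have hpa := phi_alpha' hN i α hinv hear α' hα'
  have hby : phi i y ≠ phi i x := fun h => hyx (phi_inj i h)
  have hbay : phi i y ≠ α (phi i x) := by
    rw [← hpa]
    exact fun h => hyax (phi_inj i h)
  have hnc := hplanar (phi i x) (phi i y) hby hbay
  unfold ChordsCross at hnc ⊢
  rw [← hpa, ← hpa, ← cb_phi, ← cb_phi] at hnc
  exact hnc

lemma loopPerm_apply_s5 {M : ℕ} (β : Equiv.Perm (ZMod M)) (x : ZMod M) :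
    loopPerm β x = β (x + 1) := rfl

include hinv hear in
lemma p_fix : loopPerm α i = i := by
  rw [loopPerm_apply_s5, ← hear, hinv]

include hN hα' hinv hear in
lemma q_step (x : ZMod N) (h : x.val ≠ N - 1) :
    phi i (loopPerm α' x) = loopPerm α (phi i x) := by
  rw [loopPerm_apply_s5, loopPerm_apply_s5, phi_alpha' hN i α hinv hear α' hα',
    phi_succ hN i x h]

include hN hα' hinv hear in
lemma q_last (x : ZMod N) (h : x.val = N - 1) :
    phi i (loopPerm α' x) = loopPerm α (loopPerm α (phi i x)) := by
  rw [loopPerm_apply_s5, loopPerm_apply_s5, loopPerm_apply_s5, last_add_one hN x h,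
    phi_alpha' hN i α hinv hear α' hα', phi_zero, phi_last hN i x h]
  rw [sub_add_cancel, hear]
  congr 1
  ring

lemma sc_nat {β : Type*} [Fintype β] [DecidableEq β] {f : Equiv.Perm β} {x y : β}
    (h : f.SameCycle x y) : ∃ k : ℕ, (f ^ k) x = y := by
  obtain ⟨k, -, -, hk⟩ := Equiv.Perm.SameCycle.exists_pow_eq f h
  exact ⟨k, hk⟩

include hN hα' hinv hear in
lemma sc_fwd {x y : ZMod N} (h : (loopPerm α').SameCycle x y) :
    (loopPerm α).SameCycle (phi i x) (phi i y) := by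
  obtain ⟨k, hk⟩ := sc_nat h
  clear h
  have key : ∀ k : ℕ, (loopPerm α).SameCycle (phi i x) (phi i ((loopPerm α' ^ k) x)) := by
    intro k
    induction k with
    | zero => exact Equiv.Perm.SameCycle.refl _ _
    | succ k IH =>
      refine IH.trans ?_
      set z := ((loopPerm α') ^ k) x with hz
      have hstep : ((loopPerm α') ^ (k+1)) x = loopPerm α' z := by
        rw [pow_succ', Equiv.Perm.mul_apply]
      rw [hstep]
      by_cases hval : z.val = N - 1
      · refine ⟨2, ?_⟩
        rw [q_last hN i α hinv hear α' hα' z hval,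
          show ((2:ℤ)) = ((2:ℕ):ℤ) by norm_num, zpow_natCast, pow_two,
          Equiv.Perm.mul_apply]
      · exact ⟨1, by rw [q_step hN i α hinv hear α' hα' z hval]; simp⟩
  rw [← hk]
  exact key k

include hN hα' hinv hear in
lemma sc_bwd_aux : ∀ k : ℕ, ∀ x y : ZMod N,
    ((loopPerm α) ^ k) (phi i x) = phi i y → (loopPerm α').SameCycle x y := by
  intro k
  induction k using Nat.strong_induction_on with
  | _ k IH =>
    intro x y hk
    match k with
    | 0 =>
      simp only [pow_zero, Equiv.Perm.coe_one, id_eq] at hk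
      rw [phi_inj i hk]
    | (k' + 1) =>
      rw [pow_succ, Equiv.Perm.mul_apply] at hk
      by_cases hval : x.val = N - 1
      · have hpp : loopPerm α (phi i x) = i + 1 := by
          rw [loopPerm_apply_s5, phi_last hN i x hval, sub_add_cancel, hear]
        match k' with
        | 0 =>
          rw [pow_zero] at hk
          simp only [Equiv.Perm.coe_one, id_eq] at hk
          rw [hpp] at hk
          exact absurd hk.symm (phi_ne_i1 i y)
        | (k'' + 1) =>
          rw [pow_succ, Equiv.Perm.mul_apply] at hk
          rw [← q_last hN i α hinv hear α' hα' x hval] at hk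
          have := IH k'' (by omega) _ _ hk
          exact (Equiv.Perm.SameCycle.trans ⟨1, by simp⟩ this)
      · rw [← q_step hN i α hinv hear α' hα' x hval] at hk
        have := IH k' (by omega) _ _ hk
        exact (Equiv.Perm.SameCycle.trans ⟨1, by simp⟩ this)

include hN hα' hinv hear in
lemma sc_bwd {x y : ZMod N} (h : (loopPerm α).SameCycle (phi i x) (phi i y)) :
    (loopPerm α').SameCycle x y := by
  obtain ⟨k, hk⟩ := sc_nat h
  exact sc_bwd_aux hN i α hinv hear α' hα' k x y hk

attribute [local instance] Classical.propDecidable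

include hinv hear in
lemma p_fix2 : loopPerm α i = i := by rw [loopPerm_apply_s5, ← hear, hinv]

lemma mk_p {M : ℕ} (β : Equiv.Perm (ZMod M)) (z : ZMod M) :
    Quotient.mk (orbitSetoid (loopPerm β)) (loopPerm β z) =
      Quotient.mk (orbitSetoid (loopPerm β)) z :=
  Quotient.sound (Equiv.Perm.SameCycle.symm ⟨1, by simp⟩)

include hinv hear in
lemma orbit_i {y : ZMod (N+2)} (h : (loopPerm α).SameCycle i y) : y = i := by
  obtain ⟨k, hk⟩ := h
  rw [← hk]
  exact Equiv.Perm.zpow_apply_eq_self_of_apply_eq_self (p_fix2 i α hinv hear) k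

include hinv hear in
lemma mk_eq_i {z : ZMod (N+2)}
    (h : Quotient.mk (orbitSetoid (loopPerm α)) z = Quotient.mk (orbitSetoid (loopPerm α)) i) :
    z = i := by
  have := Quotient.exact h
  exact orbit_i i α hinv hear (this.symm : (loopPerm α).SameCycle i z)

lemma hopf_loc {f : Quotient (orbitSetoid (loopPerm α)) → ZMod (N+2)}
    (hf : IsHopfMarking α f) {O y} (h : f O = y) :
    O = Quotient.mk (orbitSetoid (loopPerm α)) y := by rw [← hf O, h]

include hinv hear in
lemma hopf_at_i {f : Quotient (orbitSetoid (loopPerm α)) → ZMod (N+2)}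
    (hf : IsHopfMarking α f) : f (Quotient.mk (orbitSetoid (loopPerm α)) i) = i := by
  exact mk_eq_i i α hinv hear (hf _)

lemma one_ne_zero_big : (1 : ZMod (N+2)) ≠ 0 := by
  intro h
  have := congrArg ZMod.val h
  rw [ZMod.val_one_eq_one_mod, Nat.mod_eq_of_lt (by omega), ZMod.val_zero] at this
  omega

include hN in
lemma two_ne_zero_big : (2 : ZMod (N+2)) ≠ 0 := by
  intro h
  have := congrArg ZMod.val h
  have h2 : ((2 : ℕ) : ZMod (N+2)).val = 2 := by
    rw [ZMod.val_natCast, Nat.mod_eq_of_lt (by omega)]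
  rw [show ((2 : ZMod (N+2))) = ((2:ℕ) : ZMod (N+2)) by push_cast; ring, h2, ZMod.val_zero] at this
  omega

lemma i1_ne_i : i + 1 ≠ i := by
  intro h
  exact one_ne_zero_big (by linear_combination h)

include hinv hear in
lemma mk_i1_ne : Quotient.mk (orbitSetoid (loopPerm α)) (i+1) ≠
    Quotient.mk (orbitSetoid (loopPerm α)) i :=
  fun h => i1_ne_i i (mk_eq_i i α hinv hear h)

include hinv hear in
lemma ear_move {f : Quotient (orbitSetoid (loopPerm α)) → ZMod (N+2)}
    (hf : IsHopfMarking α f)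
    (h1 : f (Quotient.mk (orbitSetoid (loopPerm α)) (i+1)) = i + 1)
    {g : Quotient (orbitSetoid (loopPerm α)) → ZMod (N+2)}
    (hg : ∀ O, g O = if O = Quotient.mk (orbitSetoid (loopPerm α)) (i+1) then i - 1 else f O) :
    IsHopfMarking α g ∧ ChordMove α (i+1) f g := by
  have hai1 : α (i+1) = i := by rw [← hear, hinv]
  have hmki : Quotient.mk (orbitSetoid (loopPerm α)) i ≠
      Quotient.mk (orbitSetoid (loopPerm α)) (i+1) := fun h => (mk_i1_ne i α hinv hear) h.symm
  have hmk_pred : Quotient.mk (orbitSetoid (loopPerm α)) (i - 1) =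
      Quotient.mk (orbitSetoid (loopPerm α)) (i+1) := by
    have : loopPerm α (i - 1) = i + 1 := by
      rw [loopPerm_apply_s5, sub_add_cancel, hear]
    rw [← this, mk_p]
  constructor
  · intro O
    rw [hg O]
    by_cases h : O = Quotient.mk (orbitSetoid (loopPerm α)) (i+1)
    · rw [if_pos h, h, hmk_pred]
    · rw [if_neg h]; exact hf O
  · refine ⟨h1, ?_, ?_, ?_, ?_⟩
    · rw [hai1]; exact hopf_at_i i α hinv hear hf
    · rw [hg, if_pos rfl, hai1]
    · rw [hai1, hg, if_neg hmki, hopf_at_i i α hinv hear hf]; ring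
    · intro O hO1 hO2
      rw [hai1] at hO2
      rw [hg, if_neg hO1]

variable (Φ : Quotient (orbitSetoid (loopPerm α')) → Quotient (orbitSetoid (loopPerm α)))
  (hΦ : ∀ x : ZMod N, Φ (Quotient.mk (orbitSetoid (loopPerm α')) x) =
    Quotient.mk (orbitSetoid (loopPerm α)) (phi i x))

include hN hα' hinv hear hΦ in
lemma Phi_inj : Function.Injective Φ := by
  intro A B
  induction A using Quotient.ind
  induction B using Quotient.ind
  rename_i a b
  intro h
  rw [hΦ, hΦ] at h
  exact Quotient.sound (sc_bwd hN i α hinv hear α' hα' (Quotient.exact h))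

include hinv hear hΦ in
lemma Phi_ne_i (O' : Quotient (orbitSetoid (loopPerm α'))) :
    Φ O' ≠ Quotient.mk (orbitSetoid (loopPerm α)) i := by
  induction O' using Quotient.ind
  rename_i x
  rw [hΦ]
  intro h
  exact phi_ne_i i x (mk_eq_i i α hinv hear h)

include hN hinv hear hΦ in
lemma Phi_surj (O : Quotient (orbitSetoid (loopPerm α)))
    (hO : O ≠ Quotient.mk (orbitSetoid (loopPerm α)) i) : ∃ O', Φ O' = O := by
  induction O using Quotient.ind
  rename_i y
  have key : ∀ z : ZMod (N+2), z ≠ i → z ≠ i + 1 →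
      ∃ O', Φ O' = Quotient.mk (orbitSetoid (loopPerm α)) z := by
    intro z h1 h2
    refine ⟨Quotient.mk (orbitSetoid (loopPerm α')) (psi i z), ?_⟩
    rw [hΦ, phi_psi hN i z h1 h2]
  by_cases h1 : y = i
  · exact absurd (by rw [h1]) hO
  by_cases h2 : y = i + 1
  · subst h2
    have hz : loopPerm α (i + 1) = α (i + 2) := by
      rw [loopPerm_apply_s5]; congr 1; ring
    have hz1 : α (i + 2) ≠ i := by
      intro h
      have := congrArg α h
      rw [hinv, hear] at this
      exact one_ne_zero_big (by linear_combination this)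
    have hz2 : α (i + 2) ≠ i + 1 := by
      intro h
      rw [← hear] at h
      have := α.injective h
      exact two_ne_zero_big hN (by linear_combination this)
    obtain ⟨O', hO'⟩ := key _ hz1 hz2
    refine ⟨O', ?_⟩
    rw [hO', ← hz, mk_p]
  · exact key y h1 h2

include hN hinv hear hΦ in
lemma down_phi {f : Quotient (orbitSetoid (loopPerm α)) → ZMod (N+2)}
    (hf : IsHopfMarking α f) (havoid : ∀ O, f O ≠ i + 1)
    (O' : Quotient (orbitSetoid (loopPerm α'))) :
    phi i (psi i (f (Φ O'))) = f (Φ O') := by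
  apply phi_psi hN i
  · intro h
    exact Phi_ne_i i α hinv hear α' Φ hΦ O' (hopf_loc α hf h)
  · exact havoid _

include hN hα' hinv hear hΦ in
lemma down_hopf {f : Quotient (orbitSetoid (loopPerm α)) → ZMod (N+2)}
    (hf : IsHopfMarking α f) (havoid : ∀ O, f O ≠ i + 1) :
    IsHopfMarking α' (fun O' => psi i (f (Φ O'))) := by
  intro O'
  induction O' using Quotient.ind
  rename_i x
  have h1 : Quotient.mk (orbitSetoid (loopPerm α)) (f (Φ (Quotient.mk (orbitSetoid (loopPerm α')) x))) =
      Quotient.mk (orbitSetoid (loopPerm α)) (phi i x) := by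
    rw [hf, hΦ]
  have h2 := down_phi hN i α hinv hear α' Φ hΦ hf havoid (Quotient.mk (orbitSetoid (loopPerm α')) x)
  rw [← h2] at h1
  exact Quotient.sound (sc_bwd hN i α hinv hear α' hα' (Quotient.exact h1))

variable (lift : (Quotient (orbitSetoid (loopPerm α')) → ZMod N) →
    Quotient (orbitSetoid (loopPerm α)) → ZMod (N+2))
  (hlift_i : ∀ a, lift a (Quotient.mk (orbitSetoid (loopPerm α)) i) = i)
  (hlift_Φ : ∀ a O', lift a (Φ O') = phi i (a O'))

include hN hα' hinv hear hΦ hlift_i hlift_Φ in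
lemma lift_hopf {a : Quotient (orbitSetoid (loopPerm α')) → ZMod N}
    (ha : IsHopfMarking α' a) : IsHopfMarking α (lift a) := by
  intro O
  by_cases hO : O = Quotient.mk (orbitSetoid (loopPerm α)) i
  · rw [hO, hlift_i]
  · obtain ⟨O', rfl⟩ := Phi_surj hN i α hinv hear α' Φ hΦ O hO
    rw [hlift_Φ]
    induction O' using Quotient.ind
    rename_i x
    have h1 : (loopPerm α').SameCycle (a (Quotient.mk (orbitSetoid (loopPerm α')) x)) x :=
      Quotient.exact (ha (Quotient.mk (orbitSetoid (loopPerm α')) x))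
    have h2 := sc_fwd hN i α hinv hear α' hα' h1
    rw [hΦ]
    exact Quotient.sound h2

include hN hα' hinv hear hΦ hlift_i hlift_Φ in
lemma lift_down {f : Quotient (orbitSetoid (loopPerm α)) → ZMod (N+2)}
    (hf : IsHopfMarking α f) (havoid : ∀ O, f O ≠ i + 1) :
    lift (fun O' => psi i (f (Φ O'))) = f := by
  funext O
  by_cases hO : O = Quotient.mk (orbitSetoid (loopPerm α)) i
  · rw [hO, hlift_i, hopf_at_i i α hinv hear hf]
  · obtain ⟨O', rfl⟩ := Phi_surj hN i α hinv hear α' Φ hΦ O hO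
    rw [hlift_Φ]
    exact down_phi hN i α hinv hear α' Φ hΦ hf havoid O'

include hN hα' hinv hear hfree hΦ hlift_i hlift_Φ in
lemma move_lift {a b : Quotient (orbitSetoid (loopPerm α')) → ZMod N}
    (ha : IsHopfMarking α' a) (hb : IsHopfMarking α' b)
    {i₀ : ZMod N} (hm : ChordMove α' i₀ a b) :
    Relation.EqvGen (MoveRel α) (lift a) (lift b) := by
  obtain ⟨hm1, hm2, hm3, hm4, hm5⟩ := hm
  have hpa := phi_alpha' hN i α hinv hear α' hα'
  have hfpf' := alpha'_fpf hN i α hinv hfree hear α' hα'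
  set j := phi i i₀ with hj
  have haj : α j = phi i (α' i₀) := (hpa i₀).symm
  have hO12 : (Quotient.mk (orbitSetoid (loopPerm α')) i₀) ≠
      Quotient.mk (orbitSetoid (loopPerm α')) (α' i₀) := by
    intro h
    apply hfpf' i₀
    rw [← hm2, ← h, hm1]
  have hmkj : Quotient.mk (orbitSetoid (loopPerm α)) j =
      Φ (Quotient.mk (orbitSetoid (loopPerm α')) i₀) := (hΦ i₀).symm
  have hmkaj : Quotient.mk (orbitSetoid (loopPerm α)) (α j) =
      Φ (Quotient.mk (orbitSetoid (loopPerm α')) (α' i₀)) := by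
    rw [haj]; exact (hΦ (α' i₀)).symm
  have hjj : Quotient.mk (orbitSetoid (loopPerm α)) j ≠
      Quotient.mk (orbitSetoid (loopPerm α)) (α j) := by
    rw [hmkj, hmkaj]
    intro h
    exact hO12 (Phi_inj hN i α hinv hear α' hα' Φ hΦ h)
  obtain ⟨c, hc_def⟩ : ∃ c : Quotient (orbitSetoid (loopPerm α)) → ZMod (N+2),
      ∀ O, c O = if O = Quotient.mk (orbitSetoid (loopPerm α)) j then α j - 1
        else if O = Quotient.mk (orbitSetoid (loopPerm α)) (α j) then j - 1
        else lift a O := ⟨_, fun O => rfl⟩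
  have hc_j : c (Quotient.mk (orbitSetoid (loopPerm α)) j) = α j - 1 := by
    rw [hc_def, if_pos rfl]
  have hc_aj : c (Quotient.mk (orbitSetoid (loopPerm α)) (α j)) = j - 1 := by
    rw [hc_def, if_neg (fun h => hjj h.symm), if_pos rfl]
  have hc_other : ∀ O, O ≠ Quotient.mk (orbitSetoid (loopPerm α)) j →
      O ≠ Quotient.mk (orbitSetoid (loopPerm α)) (α j) → c O = lift a O := by
    intro O h1 h2
    rw [hc_def, if_neg h1, if_neg h2]
  have hmk_pred : ∀ z : ZMod (N+2), Quotient.mk (orbitSetoid (loopPerm α)) (α z - 1) =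
      Quotient.mk (orbitSetoid (loopPerm α)) z := by
    intro z
    have h : loopPerm α (α z - 1) = z := by
      rw [loopPerm_apply_s5, sub_add_cancel, hinv]
    have h2 := mk_p α (α z - 1)
    rw [h] at h2
    exact h2.symm
  have hc_hopf : IsHopfMarking α c := by
    intro O
    by_cases h1 : O = Quotient.mk (orbitSetoid (loopPerm α)) j
    · rw [h1, hc_j, hmk_pred]
    · by_cases h2 : O = Quotient.mk (orbitSetoid (loopPerm α)) (α j)
      · rw [h2, hc_aj]
        have h4 := hmk_pred (α j)
        rw [hinv] at h4
        exact h4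
      · rw [hc_other O h1 h2]
        exact lift_hopf hN i α hinv hear α' hα' Φ hΦ lift hlift_i hlift_Φ ha O
  have hla_hopf := lift_hopf hN i α hinv hear α' hα' Φ hΦ lift hlift_i hlift_Φ ha
  have hmove1 : ChordMove α j (lift a) c := by
    refine ⟨?_, ?_, hc_j, hc_aj, fun O h1 h2 => (hc_other O h1 h2).symm⟩
    · rw [hmkj, hlift_Φ, hm1]
    · rw [hmkaj, hlift_Φ, hm2, haj]
  have hR1 : MoveRel α (lift a) c := ⟨hla_hopf, hc_hopf, j, hmove1⟩
  have hagree : ∀ O, O ≠ Quotient.mk (orbitSetoid (loopPerm α)) j →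
      O ≠ Quotient.mk (orbitSetoid (loopPerm α)) (α j) → lift a O = lift b O := by
    intro O h1 h2
    by_cases hOi : O = Quotient.mk (orbitSetoid (loopPerm α)) i
    · rw [hOi, hlift_i, hlift_i]
    · obtain ⟨O', rfl⟩ := Phi_surj hN i α hinv hear α' Φ hΦ O hOi
      rw [hlift_Φ, hlift_Φ]
      congr 1
      apply hm5
      · intro h
        exact h1 (by rw [h, ← hmkj])
      · intro h
        exact h2 (by rw [h, ← hmkaj])
  have hpred : ∀ x : ZMod N, x ≠ 0 → phi i (x - 1) = phi i x - 1 := by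
    intro x hx
    have h1 : (x - 1).val ≠ N - 1 := by
      intro h
      apply hx
      have := last_add_one hN (x - 1) h
      linear_combination this
    have h2 := phi_succ hN i (x - 1) h1
    rw [sub_add_cancel] at h2
    linear_combination -h2
  have hpred0 : phi i ((0 : ZMod N) - 1) = i - 1 :=
    phi_last hN i _ (neg_one_val_small hN)
  have hlb_j : lift b (Quotient.mk (orbitSetoid (loopPerm α)) j) = phi i (α' i₀ - 1) := by
    rw [hmkj, hlift_Φ, hm3]
  have hlb_aj : lift b (Quotient.mk (orbitSetoid (loopPerm α)) (α j)) = phi i (i₀ - 1) := by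
    rw [hmkaj, hlift_Φ, hm4]
  by_cases hi0 : i₀ = 0
  · -- the mark at α j wraps through the ear
    have ha0 : α' i₀ ≠ 0 := by
      intro h
      exact hfpf' i₀ (by rw [h, hi0])
    have hj2 : j = i + 2 := by rw [hj, hi0, phi_zero]
    have hcaj1 : c (Quotient.mk (orbitSetoid (loopPerm α)) (α j)) = i + 1 := by
      rw [hc_aj, hj2]; ring
    have horb : Quotient.mk (orbitSetoid (loopPerm α)) (i + 1) =
        Quotient.mk (orbitSetoid (loopPerm α)) (α j) := by
      have h := hc_hopf (Quotient.mk (orbitSetoid (loopPerm α)) (α j))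
      rw [hcaj1] at h
      exact h
    have hc1 : c (Quotient.mk (orbitSetoid (loopPerm α)) (i + 1)) = i + 1 := by
      rw [horb]; exact hcaj1
    obtain ⟨d, hd_def⟩ : ∃ d : Quotient (orbitSetoid (loopPerm α)) → ZMod (N+2),
        ∀ O, d O = if O = Quotient.mk (orbitSetoid (loopPerm α)) (i+1) then i - 1 else c O :=
      ⟨_, fun O => rfl⟩
    obtain ⟨hd_hopf, hd_move⟩ := ear_move i α hinv hear hc_hopf hc1 hd_def
    have hR2 : MoveRel α c d := ⟨hc_hopf, hd_hopf, i + 1, hd_move⟩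
    have hdb : d = lift b := by
      funext O
      rw [hd_def]
      by_cases h2 : O = Quotient.mk (orbitSetoid (loopPerm α)) (α j)
      · rw [h2, if_pos horb.symm, hlb_aj, hi0, hpred0]
      · have hO1 : O ≠ Quotient.mk (orbitSetoid (loopPerm α)) (i+1) :=
          fun h => h2 (h.trans horb)
        rw [if_neg hO1]
        by_cases h1 : O = Quotient.mk (orbitSetoid (loopPerm α)) j
        · rw [h1, hc_j, hlb_j, hpred _ ha0, haj]
        · rw [hc_other O h1 h2]
          exact hagree O h1 h2
    exact Relation.EqvGen.trans _ _ _ (Relation.EqvGen.rel _ _ hR1)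
      (hdb ▸ Relation.EqvGen.rel _ _ hR2)
  · by_cases ha0 : α' i₀ = 0
    · -- the mark at j wraps through the ear
      have haj2 : α j = i + 2 := by rw [haj, ha0, phi_zero]
      have hcj1 : c (Quotient.mk (orbitSetoid (loopPerm α)) j) = i + 1 := by
        rw [hc_j, haj2]; ring
      have horb : Quotient.mk (orbitSetoid (loopPerm α)) (i + 1) =
          Quotient.mk (orbitSetoid (loopPerm α)) j := by
        have h := hc_hopf (Quotient.mk (orbitSetoid (loopPerm α)) j)
        rw [hcj1] at h
        exact h
      have hc1 : c (Quotient.mk (orbitSetoid (loopPerm α)) (i + 1)) = i + 1 := by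
        rw [horb]; exact hcj1
      obtain ⟨d, hd_def⟩ : ∃ d : Quotient (orbitSetoid (loopPerm α)) → ZMod (N+2),
          ∀ O, d O = if O = Quotient.mk (orbitSetoid (loopPerm α)) (i+1) then i - 1 else c O :=
        ⟨_, fun O => rfl⟩
      obtain ⟨hd_hopf, hd_move⟩ := ear_move i α hinv hear hc_hopf hc1 hd_def
      have hR2 : MoveRel α c d := ⟨hc_hopf, hd_hopf, i + 1, hd_move⟩
      have hdb : d = lift b := by
        funext O
        rw [hd_def]
        by_cases h1 : O = Quotient.mk (orbitSetoid (loopPerm α)) j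
        · rw [h1, if_pos horb.symm, hlb_j, ha0, hpred0]
        · have hO1 : O ≠ Quotient.mk (orbitSetoid (loopPerm α)) (i+1) :=
            fun h => h1 (h.trans horb)
          rw [if_neg hO1]
          by_cases h2 : O = Quotient.mk (orbitSetoid (loopPerm α)) (α j)
          · rw [h2, hc_aj, hlb_aj, hpred _ hi0, hj]
          · rw [hc_other O h1 h2]
            exact hagree O h1 h2
      exact Relation.EqvGen.trans _ _ _ (Relation.EqvGen.rel _ _ hR1)
        (hdb ▸ Relation.EqvGen.rel _ _ hR2)
    · -- no wrap : a single chord move suffices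
      have hcb : c = lift b := by
        funext O
        by_cases h1 : O = Quotient.mk (orbitSetoid (loopPerm α)) j
        · rw [h1, hc_j, hlb_j, hpred _ ha0, haj]
        · by_cases h2 : O = Quotient.mk (orbitSetoid (loopPerm α)) (α j)
          · rw [h2, hc_aj, hlb_aj, hpred _ hi0, hj]
          · rw [hc_other O h1 h2]
            exact hagree O h1 h2
      exact hcb ▸ Relation.EqvGen.rel _ _ hR1

end Transfer

lemma step {N : ℕ} (hN : 2 ≤ N) [NeZero N]
    (IH : ∀ (α' : Equiv.Perm (ZMod N)), (∀ x, α' (α' x) = x) → (∀ x, α' x ≠ x) →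
      NonCrossing α' → ∀ a b, IsHopfMarking α' a → IsHopfMarking α' b →
      Relation.EqvGen (MoveRel α') a b)
    (α : Equiv.Perm (ZMod (N+2))) (hinv : ∀ x, α (α x) = x) (hfree : ∀ x, α x ≠ x)
    (hplanar : NonCrossing α)
    (f g : Quotient (orbitSetoid (loopPerm α)) → ZMod (N+2))
    (hf : IsHopfMarking α f) (hg : IsHopfMarking α g) :
    Relation.EqvGen (MoveRel α) f g := by
  classical
  obtain ⟨i, hear⟩ := ear_exists (by omega) α hfree hplanar
  have hinvol := alphaSmall_invol hN i α hinv hear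
  set α' : Equiv.Perm (ZMod N) := Function.Involutive.toPerm _ hinvol with hα'def
  have hα' : ∀ x, α' x = psi i (α (phi i x)) := fun x => rfl
  have hai' : ∀ x, α' (α' x) = x := alpha'_inv hN i α hinv hear α' hα'
  have hfree' := alpha'_fpf hN i α hinv hfree hear α' hα'
  have hplanar' := noncrossing' hN i α hinv hear α' hα' hplanar
  set Φ : Quotient (orbitSetoid (loopPerm α')) → Quotient (orbitSetoid (loopPerm α)) :=
    Quotient.map (phi i) (fun x y h => sc_fwd hN i α hinv hear α' hα' h) with hΦdef
  have hΦ : ∀ x : ZMod N, Φ (Quotient.mk (orbitSetoid (loopPerm α')) x) =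
      Quotient.mk (orbitSetoid (loopPerm α)) (phi i x) := fun x => rfl
  haveI : Nonempty (Quotient (orbitSetoid (loopPerm α'))) :=
    ⟨Quotient.mk (orbitSetoid (loopPerm α')) 0⟩
  obtain ⟨lift, hlift_def⟩ : ∃ L : (Quotient (orbitSetoid (loopPerm α')) → ZMod N) →
      Quotient (orbitSetoid (loopPerm α)) → ZMod (N+2),
      ∀ a O, L a O = if O = Quotient.mk (orbitSetoid (loopPerm α)) i then i
        else phi i (a (Function.invFun Φ O)) := ⟨_, fun a O => rfl⟩
  have hlift_i : ∀ a, lift a (Quotient.mk (orbitSetoid (loopPerm α)) i) = i := by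
    intro a
    rw [hlift_def, if_pos rfl]
  have hlift_Φ : ∀ a O', lift a (Φ O') = phi i (a O') := by
    intro a O'
    have hne := Phi_ne_i i α hinv hear α' Φ hΦ O'
    have hinj := Phi_inj hN i α hinv hear α' hα' Φ hΦ
    rw [hlift_def, if_neg hne, Function.leftInverse_invFun hinj O']
  have hearmark : ∀ (h : Quotient (orbitSetoid (loopPerm α)) → ZMod (N+2)),
      IsHopfMarking α h → ∃ h', Relation.EqvGen (MoveRel α) h h' ∧
        IsHopfMarking α h' ∧ ∀ O, h' O ≠ i + 1 := by
    intro h hh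
    by_cases h1 : h (Quotient.mk (orbitSetoid (loopPerm α)) (i+1)) = i + 1
    · obtain ⟨h', hh'_def⟩ :
          ∃ h' : Quotient (orbitSetoid (loopPerm α)) → ZMod (N+2), ∀ O,
          h' O = if O = Quotient.mk (orbitSetoid (loopPerm α)) (i+1) then i - 1 else h O :=
        ⟨_, fun O => rfl⟩
      obtain ⟨hH, hM⟩ := ear_move i α hinv hear hh h1 hh'_def
      refine ⟨h', Relation.EqvGen.rel _ _ ⟨hh, hH, i+1, hM⟩, hH, ?_⟩
      intro O
      rw [hh'_def]
      by_cases hO : O = Quotient.mk (orbitSetoid (loopPerm α)) (i+1)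
      · rw [if_pos hO]
        intro hcon
        exact two_ne_zero_big hN (by linear_combination -hcon)
      · rw [if_neg hO]
        intro hcon
        exact hO (hopf_loc α hh hcon)
    · refine ⟨h, Relation.EqvGen.refl h, hh, ?_⟩
      intro O hcon
      exact h1 ((hopf_loc α hh hcon) ▸ hcon)
  obtain ⟨f', hff', hf'H, hf'A⟩ := hearmark f hf
  obtain ⟨g', hgg', hg'H, hg'A⟩ := hearmark g hg
  have hfd := down_hopf hN i α hinv hear α' hα' Φ hΦ hf'H hf'A
  have hgd := down_hopf hN i α hinv hear α' hα' Φ hΦ hg'H hg'A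
  have hchain := IH α' hai' hfree' hplanar' _ _ hfd hgd
  have hliftchain : ∀ a b, Relation.EqvGen (MoveRel α') a b →
      Relation.EqvGen (MoveRel α) (lift a) (lift b) := by
    intro a b h
    induction h with
    | rel x y hxy =>
      obtain ⟨hx, hy, i₀, hmov⟩ := hxy
      exact move_lift hN i α hinv hfree hear α' hα' Φ hΦ lift hlift_i hlift_Φ hx hy hmov
    | refl x => exact Relation.EqvGen.refl _
    | symm x y _ ih => exact Relation.EqvGen.symm _ _ ih
    | trans x y z _ _ ih1 ih2 => exact Relation.EqvGen.trans _ _ _ ih1 ih2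
  have h2 := hliftchain _ _ hchain
  rw [lift_down hN i α hinv hear α' hα' Φ hΦ lift hlift_i hlift_Φ hf'H hf'A,
    lift_down hN i α hinv hear α' hα' Φ hΦ lift hlift_i hlift_Φ hg'H hg'A] at h2
  exact Relation.EqvGen.trans _ _ _ hff'
    (Relation.EqvGen.trans _ _ _ h2 (Relation.EqvGen.symm _ _ hgg'))

lemma base_case (α : Equiv.Perm (ZMod 2)) (hfree : ∀ x, α x ≠ x)
    (f g : Quotient (orbitSetoid (loopPerm α)) → ZMod 2)
    (hf : IsHopfMarking α f) (hg : IsHopfMarking α g) :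
    Relation.EqvGen (MoveRel α) f g := by
  have hall : ∀ x : ZMod 2, x = 0 ∨ x = 1 := by decide
  have hα : ∀ y : ZMod 2, α y = y + 1 := by
    intro y
    rcases hall y with h | h <;> rcases hall (α y) with h2 | h2
    · exact absurd (h2.trans h.symm) (hfree y)
    · rw [h2, h]; decide
    · rw [h2, h]; decide
    · exact absurd (h2.trans h.symm) (hfree y)
  have hp : ∀ x : ZMod 2, loopPerm α x = x := by
    intro x
    rw [loopPerm_apply_s5, hα]
    have h2 : (2 : ZMod 2) = 0 := by decide
    linear_combination h2
  have hone : loopPerm α = 1 := Equiv.ext hp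
  have hfg : f = g := by
    funext O
    have h1 : Quotient.mk (orbitSetoid (loopPerm α)) (f O) =
        Quotient.mk (orbitSetoid (loopPerm α)) (g O) := (hf O).trans (hg O).symm
    obtain ⟨k, hk⟩ := Quotient.exact h1
    rw [← hk, hone]
    simp
  rw [hfg]
  exact Relation.EqvGen.refl g


/-- Any two Hopf markings of a planar chord diagram are connected by a finite sequence
of chord moves and inverse chord moves: the equivalence relation generated by the chord
moves at all chords is the total relation on the set of Hopf markings. -/
theorem hopf_markings_connected_by_chord_moves
    (n : ℕ) (hn : 1 ≤ n) (α : Equiv.Perm (ZMod (2 * n)))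
    (hinv : ∀ i, α (α i) = i) (hfree : ∀ i, α i ≠ i)
    (hplanar : NonCrossing α)
    (f g : Quotient (orbitSetoid (loopPerm α)) → ZMod (2 * n))
    (hf : IsHopfMarking α f) (hg : IsHopfMarking α g) :
    Relation.EqvGen
      (fun a b => IsHopfMarking α a ∧ IsHopfMarking α b ∧ ∃ i, ChordMove α i a b)
      f g := by
  have key : ∀ m : ℕ, 1 ≤ m → ∀ (β : Equiv.Perm (ZMod (2*m))),
      (∀ x, β (β x) = x) → (∀ x, β x ≠ x) → NonCrossing β →
      ∀ a b, IsHopfMarking β a → IsHopfMarking β b →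
        Relation.EqvGen (MoveRel β) a b := by
    intro m hm
    induction m, hm using Nat.le_induction with
    | base =>
      intro β hbinv hbfree hbpl a b ha hb
      exact base_case β hbfree a b ha hb
    | succ m hm IH =>
      intro β hbinv hbfree hbpl a b ha hb
      haveI : NeZero (2*m) := ⟨by omega⟩
      exact step (N := 2*m) (by omega) IH β hbinv hbfree hbpl a b ha hb
  exact key n hn α hinv hfree hplanar f g hf hg
end

section
/- Let x₁, y₁, …, x_δ, y_δ be 2δ pairwise distinct complex numbers (δ ≥ 1), and let (d₁, …, d_n) and (d'₁, …, d'_n) be two finite lists of complex numbers, each entry distinct from every x_k and every y_k, such that the multiset {d₁, …, d_n} is disjoint from the multiset {d'₁, …, d'_n}. Then the following are equivalent: (i) there exists a nonzero rational function f ∈ ℂ(z) whose zeros in ℂ, counted with multiplicity, are exactly d'₁, …, d'_n, whose poles in ℂ, counted with multiplicity, are exactly d₁, …, d_n, which has neither a zero nor a pole at ∞, and which satisfies f(x_k) = f(y_k) for every k = 1, …, δ; (ii) for every k = 1, …, δ one has ∏_{j=1}^{n} (x_k − d'_j)·(y_k − d_j) = ∏_{j=1}^{n} (y_k − d'_j)·(x_k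 − d_j). (This is the genus-zero case of the paper's Abel–Jacobi theorem for the singular surface Σ: an effective divisor D' supported on Σ* is Σ-equivalent to D if and only if its image under the Abel–Jacobi map vanishes in Jac(Σ).) -/
open Polynomial

private lemma prod_ofFn_eval {N : ℕ} (g : Fin N → ℂ) (z : ℂ) :
    (((List.ofFn g : Multiset ℂ)).map (fun a => z - a)).prod = ∏ j, (z - g j) := by
  simp [Multiset.map_coe, Multiset.prod_coe, List.map_ofFn, List.prod_ofFn, Function.comp]

private lemma prod_X_sub_C_eq {N : ℕ} (g : Fin N → ℂ) :
    (((List.ofFn g : Multiset ℂ)).map (fun a => X - C a)).prod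
      = ∏ j, (X - C (g j)) := by
  simp [Multiset.map_coe, Multiset.prod_coe, List.map_ofFn, List.prod_ofFn, Function.comp]

private lemma num_denom_of_coprime {p q : ℂ[X]} (hq : q.Monic) (h : IsCoprime p q) :
    (algebraMap ℂ[X] (RatFunc ℂ) p / algebraMap ℂ[X] (RatFunc ℂ) q).num = p ∧
      (algebraMap ℂ[X] (RatFunc ℂ) p / algebraMap ℂ[X] (RatFunc ℂ) q).denom = q := by
  have hu : IsUnit (gcd p q) := (gcd_isUnit_iff p q).2 h
  have hg1 : gcd p q = 1 := by
    rw [← normalize_gcd]; exact normalize_eq_one.2 hu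
  constructor
  · rw [RatFunc.num_div, hg1, EuclideanDomain.div_one, EuclideanDomain.div_one,
      hq.leadingCoeff]
    simp
  · rw [RatFunc.denom_div _ hq.ne_zero, hg1]
    simp [EuclideanDomain.div_one, hq.leadingCoeff]

/-- The genus-zero Abel–Jacobi theorem for the nodal rational curve `Σ` obtained from
`ℙ¹` by identifying `x k` with `y k` for `k = 1, …, δ`:  given two disjoint effective
divisors `∑ [d j]` and `∑ [d' j]` of the same degree `N`, supported in `ℂ` away from
the nodes, there is a nonzero rational function on `Σ` (i.e. `F ∈ ℂ(z)` with
`F (x k) = F (y k)` for all `k`) whose zeros, counted with multiplicity, are exactly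
the `d' j`, whose poles are exactly the `d j`, and which has neither a zero nor a pole
at `∞`, if and only if
`∏ j (x k − d' j)(y k − d j) = ∏ j (y k − d' j)(x k − d j)` for every `k`. -/
theorem abel_jacobi_nodal_rational
    (δ N : ℕ) (hδ : 1 ≤ δ)
    (x y : Fin δ → ℂ)
    (hdist : Function.Injective (Sum.elim x y : Fin δ ⊕ Fin δ → ℂ))
    (d d' : Fin N → ℂ)
    (hdx : ∀ j k, d j ≠ x k ∧ d j ≠ y k)
    (hd'x : ∀ j k, d' j ≠ x k ∧ d' j ≠ y k)
    (hdd' : ∀ j j', d j ≠ d' j') :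
    (∃ F : RatFunc ℂ, F ≠ 0 ∧
        F.num.roots = (List.ofFn d' : Multiset ℂ) ∧
        F.denom.roots = (List.ofFn d : Multiset ℂ) ∧
        F.num.degree = F.denom.degree ∧
        ∀ k, RatFunc.eval (RingHom.id ℂ) (x k) F = RatFunc.eval (RingHom.id ℂ) (y k) F)
      ↔ ∀ k, (∏ j, (x k - d' j) * (y k - d j)) = ∏ j, (y k - d' j) * (x k - d j) := by
  constructor
  · rintro ⟨F, hF0, hnum, hden, hdeg, heq⟩ k
    have hnum0 : F.num ≠ 0 := RatFunc.num_ne_zero hF0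
    have hden0 : F.denom ≠ 0 := F.denom_ne_zero
    -- reconstruct num and denom from their roots
    have hncard : F.num.roots.card = F.num.natDegree :=
      Polynomial.splits_iff_card_roots.1 (IsAlgClosed.splits _)
    have hdcard : F.denom.roots.card = F.denom.natDegree :=
      Polynomial.splits_iff_card_roots.1 (IsAlgClosed.splits _)
    have hnumeq := Polynomial.C_leadingCoeff_mul_prod_multiset_X_sub_C hncard
    have hdeneq := Polynomial.C_leadingCoeff_mul_prod_multiset_X_sub_C hdcard
    rw [hnum] at hnumeq
    rw [hden] at hdeneq
    set a := F.num.leadingCoeff with ha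
    set b := F.denom.leadingCoeff with hb
    have ha0 : a ≠ 0 := leadingCoeff_ne_zero.2 hnum0
    have hb0 : b ≠ 0 := leadingCoeff_ne_zero.2 hden0
    have hnev : ∀ z : ℂ, F.num.eval z = a * ∏ j, (z - d' j) := by
      intro z
      rw [← hnumeq, eval_mul, eval_C, eval_multiset_prod]
      congr 1
      rw [Multiset.map_map]
      simpa using prod_ofFn_eval d' z
    have hdev : ∀ z : ℂ, F.denom.eval z = b * ∏ j, (z - d j) := by
      intro z
      rw [← hdeneq, eval_mul, eval_C, eval_multiset_prod]
      congr 1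
      rw [Multiset.map_map]
      simpa using prod_ofFn_eval d z
    have hdenx : F.denom.eval (x k) ≠ 0 := by
      rw [hdev]
      exact mul_ne_zero hb0 (Finset.prod_ne_zero_iff.2 fun j _ =>
        sub_ne_zero.2 fun h => (hdx j k).1 h.symm)
    have hdeny : F.denom.eval (y k) ≠ 0 := by
      rw [hdev]
      exact mul_ne_zero hb0 (Finset.prod_ne_zero_iff.2 fun j _ =>
        sub_ne_zero.2 fun h => (hdx j k).2 h.symm)
    have id2 : ∀ (z : ℂ) (p : ℂ[X]), Polynomial.eval₂ (RingHom.id ℂ) z p = p.eval z :=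
      fun _ _ => rfl
    have := heq k
    rw [RatFunc.eval, RatFunc.eval, id2, id2, id2, id2,
      div_eq_div_iff hdenx hdeny] at this
    rw [hnev, hnev, hdev, hdev] at this
    have key : (a * b) * ((∏ j, (x k - d' j)) * ∏ j, (y k - d j))
        = (a * b) * ((∏ j, (y k - d' j)) * ∏ j, (x k - d j)) := by ring_nf; ring_nf at this; linear_combination this
    have := mul_left_cancel₀ (mul_ne_zero ha0 hb0) key
    rw [Finset.prod_mul_distrib, Finset.prod_mul_distrib]
    exact this
  · intro h
    set P : ℂ[X] := ∏ j, (X - C (d j)) with hP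
    set P' : ℂ[X] := ∏ j, (X - C (d' j)) with hP'
    have hPm : P.Monic := monic_prod_of_monic _ _ fun j _ => monic_X_sub_C _
    have hP'm : P'.Monic := monic_prod_of_monic _ _ fun j _ => monic_X_sub_C _
    have hcop : IsCoprime P' P := by
      apply IsCoprime.prod_left
      intro j _
      apply IsCoprime.prod_right
      intro j' _
      exact isCoprime_X_sub_C_of_isUnit_sub
        (IsUnit.mk0 _ (sub_ne_zero.2 fun hh => hdd' j' j hh.symm))
    set F : RatFunc ℂ := algebraMap ℂ[X] (RatFunc ℂ) P' / algebraMap ℂ[X] (RatFunc ℂ) P with hF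
    obtain ⟨hFn, hFd⟩ := num_denom_of_coprime hPm hcop
    rw [← hF] at hFn hFd
    have hPev : ∀ z : ℂ, P.eval z = ∏ j, (z - d j) := by
      intro z; rw [hP, eval_prod]; simp
    have hP'ev : ∀ z : ℂ, P'.eval z = ∏ j, (z - d' j) := by
      intro z; rw [hP', eval_prod]; simp
    refine ⟨F, ?_, ?_, ?_, ?_, ?_⟩
    · intro h0
      rw [h0] at hFn
      exact hP'm.ne_zero (by rw [← hFn]; simp)
    · rw [hFn, hP', ← prod_X_sub_C_eq d', Polynomial.roots_multiset_prod_X_sub_C]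
    · rw [hFd, hP, ← prod_X_sub_C_eq d, Polynomial.roots_multiset_prod_X_sub_C]
    · rw [hFn, hFd, hP, hP', degree_prod, degree_prod]
      simp
    · intro k
      have hPx : P.eval (x k) ≠ 0 := by
        rw [hPev]
        exact Finset.prod_ne_zero_iff.2 fun j _ =>
          sub_ne_zero.2 fun hh => (hdx j k).1 hh.symm
      have hPy : P.eval (y k) ≠ 0 := by
        rw [hPev]
        exact Finset.prod_ne_zero_iff.2 fun j _ =>
          sub_ne_zero.2 fun hh => (hdx j k).2 hh.symm
      have id2 : ∀ (z : ℂ) (p : ℂ[X]), Polynomial.eval₂ (RingHom.id ℂ) z p = p.eval z :=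
        fun _ _ => rfl
      rw [RatFunc.eval, RatFunc.eval, hFn, hFd, id2, id2, id2, id2, div_eq_div_iff hPx hPy,
        hPev, hPev, hP'ev, hP'ev]
      have := h k
      rw [Finset.prod_mul_distrib, Finset.prod_mul_distrib] at this
      linear_combination this
end

section
/- Let x₁, y₁, …, x_δ, y_δ be 2δ pairwise distinct complex numbers (δ ≥ 1). Let q₁, …, q_s be distinct complex numbers, each distinct from every x_k and y_k, let m₁, …, m_s be positive integers with n = m₁ + ⋯ + m_s, and set Q(z) = ∏_{i=1}^{s} (z − q_i)^{m_i}. Define the ℂ-vector space V_D = { P ∈ ℂ[z] : deg P ≤ n and P(x_k)·Q(y_k) = P(y_k)·Q(x_k) for all k = 1, …, δ }, and define Ω_{−D} = { c ∈ ℂ^δ : Q divides the polynomial N_c(z) = Σ_{k=1}^{δ} c_k (y_k − x_k) ∏_{l ≠ k} (z − x_l)(z − y_l) }. Then dim_ℂ V_D = n + 1 − δ + dim_ℂ Ω_{−D}. (This is the genus-zero case of the paper's Riemann–Roch theorem for the singular surface Σ: dim |D|_Σ = n − g − δ + dim Ω_{−D}(Σ).) -/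
/-! Put `f = P / Q`. One `δ × (N + 1)` matrix `M` governs both sides: its `k`-th row is the node
functional `P ↦ f(y k) - f(x k)` on polynomials of degree `≤ N` in the monomial basis, so
`V_D = ker M`. Dually, `(Mᵀ c) t` is, up to sign, the total residue at the nodes of
`z ^ t ω_c / Q`; by the residue theorem these vanish for all `t ≤ N` exactly when `Q ∣ N_c`, so
`Ω_{-D} = ker Mᵀ`, and rank–nullity with `rank Mᵀ = rank M` gives the formula. The residue theorem
enters in its finite form: `∑ F(v) / R'(v)` over the `2δ` nodes `v`, with `R = ∏ (z - v)`, is the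
coefficient of `z ^ (2δ - 1)` in `F` whenever `deg F < 2δ`. -/

open Polynomial

/-- The polynomial `(y k − x k) · ∏_{l ≠ k} (z − x l)(z − y l)` appearing in the
numerator `N_c` of the `Σ`-holomorphic form `ω_c`. -/
noncomputable def nodalFormNumBasis (δ : ℕ) (x y : Fin δ → ℂ) (k : Fin δ) :
    Polynomial ℂ :=
  C (y k - x k) * ∏ l ∈ Finset.univ.erase k, ((X - C (x l)) * (X - C (y l)))

/-- The linear map `c ↦ N_c(z) = ∑ k c k (y k − x k) ∏_{l ≠ k} (z − x l)(z − y l)`. -/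
noncomputable def nodalFormNum (δ : ℕ) (x y : Fin δ → ℂ) :
    (Fin δ → ℂ) →ₗ[ℂ] Polynomial ℂ :=
  ∑ k, (LinearMap.proj k).smulRight (nodalFormNumBasis δ x y k)

/-- The space `V_D` of polynomials `P` with `deg P ≤ N` satisfying the node conditions
`P(x k)·Q(y k) = P(y k)·Q(x k)` for all `k` (i.e. `P/Q` descends to the nodal curve). -/
noncomputable def VD (N δ : ℕ) (x y : Fin δ → ℂ) (Q : Polynomial ℂ) :
    Submodule ℂ (Polynomial ℂ) :=
  Polynomial.degreeLE ℂ (N : WithBot ℕ) ⊓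
    ⨅ k : Fin δ, LinearMap.ker
      (Q.eval (y k) • Polynomial.leval (x k) - Q.eval (x k) • Polynomial.leval (y k))

/-- The space `Ω_{−D}` of coefficient vectors `c ∈ ℂ^δ` such that `Q` divides `N_c`,
i.e. of `Σ`-holomorphic forms vanishing on `D`. -/
noncomputable def OmegaD (δ : ℕ) (x y : Fin δ → ℂ) (Q : Polynomial ℂ) :
    Submodule ℂ (Fin δ → ℂ) :=
  Submodule.comap (nodalFormNum δ x y) ((Ideal.span {Q}).restrictScalars ℂ)

open Finset
open scoped Matrix

theorem Polynomial.degree_mul_lt_iff_degree_lt_sub {R : Type*} [Semiring R] [NoZeroDivisors R]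
    {p q : R[X]} (hp : p ≠ 0) {n : ℕ} :
    (p * q).degree < n ↔ q.degree < ↑(n - p.natDegree) := by
  by_cases hq : q = 0
  · simp [hq]
  rw [← natDegree_lt_iff_degree_lt (mul_ne_zero hp hq), natDegree_mul hp hq,
    ← natDegree_lt_iff_degree_lt hq]
  omega

namespace Lagrange

variable {F ι : Type*} [Field F] [DecidableEq ι] {s : Finset ι} {v : ι → F}

theorem sum_eval_nodal_erase_mul_div (hvs : Set.InjOn v s) {j : ι} (hj : j ∈ s) (f : ι → F) :
    ∑ i ∈ s, (nodal (s.erase j) v).eval (v i) * f i / ∏ k ∈ s.erase i, (v i - v k) = f j := by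
  rw [Finset.sum_eq_single_of_mem j hj fun i hi hij ↦ by
    rw [eval_nodal_at_node (mem_erase.2 ⟨hij, hi⟩), zero_mul, zero_div]]
  rw [eval_nodal, mul_div_right_comm, div_self, one_mul]
  exact prod_ne_zero_iff.2 fun k hk ↦ sub_ne_zero.2 fun h ↦
    (mem_erase.1 hk).1 (hvs hj (mem_erase.1 hk).2 h).symm

theorem sum_mul_pow_div_eq_coeff_interpolate (hvs : Set.InjOn v s) (r : ι → F) {m : ℕ}
    (h : (interpolate s v r).degree < ↑(#s - m)) :
    ∑ i ∈ s, r i * v i ^ m / ∏ k ∈ s.erase i, (v i - v k) =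
      (interpolate s v r).coeff (#s - (m + 1)) := by
  set G := interpolate s v r with hG
  by_cases hm : m < #s
  · have hdeg : (G * X ^ m).degree < (s.card : WithBot ℕ) := by
      rwa [mul_comm, degree_mul_lt_iff_degree_lt_sub (pow_ne_zero _ X_ne_zero), natDegree_X_pow]
    have hcoeff : (G * X ^ m).coeff (#s - 1) = G.coeff (#s - (m + 1)) := by
      rw [coeff_mul_X_pow', if_pos (by omega), Nat.sub_sub, add_comm 1]
    rw [← hcoeff, coeff_eq_sum hvs hdeg]
    refine sum_congr rfl fun i hi ↦ ?_
    rw [eval_mul, eval_pow, eval_X, eval_interpolate_at_node r hvs hi]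
  · have hG0 : G = 0 := by simpa [Nat.sub_eq_zero_of_le (not_lt.1 hm)] using h
    rw [hG0, coeff_zero]
    refine sum_eq_zero fun i hi ↦ ?_
    rw [← eval_interpolate_at_node r hvs hi, ← hG, hG0, eval_zero, zero_mul, zero_div]

theorem degree_interpolate_lt_sub_iff (hvs : Set.InjOn v s) (r : ι → F) (m : ℕ) :
    (interpolate s v r).degree < ↑(#s - m) ↔
      ∀ t < m, ∑ i ∈ s, r i * v i ^ t / ∏ k ∈ s.erase i, (v i - v k) = 0 := by
  induction m with
  | zero => simpa using degree_interpolate_lt r hvs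
  | succ m ih =>
    rw [Nat.forall_lt_succ_right, ← ih]
    constructor
    · intro h
      have h' : (interpolate s v r).degree < ↑(#s - m) := h.trans_le (by gcongr; omega)
      rw [sum_mul_pow_div_eq_coeff_interpolate hvs r h']
      exact ⟨h', coeff_eq_zero_of_degree_lt h⟩
    · rintro ⟨h, hcoeff⟩
      rw [sum_mul_pow_div_eq_coeff_interpolate hvs r h] at hcoeff
      rw [degree_lt_iff_coeff_zero] at h ⊢
      intro j hj
      obtain rfl | hj := hj.eq_or_lt
      exacts [hcoeff, h j (by omega)]

theorem dvd_iff_degree_interpolate_lt (hvs : Set.InjOn v s) {Q P : F[X]} (hQ : Q ≠ 0)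
    (hQs : ∀ i ∈ s, Q.eval (v i) ≠ 0) {n : ℕ} (hn : n ≤ #s) (hP : P.degree < n) :
    Q ∣ P ↔ (interpolate s v fun i ↦ P.eval (v i) / Q.eval (v i)).degree < ↑(n - Q.natDegree) := by
  have hns : (n : WithBot ℕ) ≤ s.card := by exact_mod_cast hn
  constructor
  · rintro ⟨S, rfl⟩
    have hS := (degree_mul_lt_iff_degree_lt_sub hQ).1 hP
    rwa [← eq_interpolate_of_eval_eq _ hvs (hS.trans_le (by gcongr; omega)) fun i hi ↦ by
      rw [eval_mul, mul_div_cancel_left₀ _ (hQs i hi)]]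
  · intro hG
    have hQG := (degree_mul_lt_iff_degree_lt_sub hQ).2 hG
    refine ⟨_, eq_of_degrees_lt_of_eval_index_eq s hvs (hP.trans_le hns) (hQG.trans_le hns) ?_⟩
    intro i hi
    rw [eval_mul, eval_interpolate_at_node _ hvs hi, mul_div_cancel₀ _ (hQs i hi)]

end Lagrange

theorem Matrix.rank_add_finrank_ker_mulVecLin {m n K : Type*} [Fintype m] [Fintype n] [Field K]
    (A : Matrix m n K) : A.rank + Module.finrank K (LinearMap.ker A.mulVecLin) = Fintype.card n :=
  (LinearMap.finrank_range_add_finrank_ker A.mulVecLin).trans (Module.finrank_fintype_fun_eq_card K)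

theorem eval_prod_X_sub_C_pow_ne_zero {ι K : Type*} [Fintype ι] [Field K] {q : ι → K} (m : ι → ℕ)
    {z : K} (hz : ∀ i, q i ≠ z) : (∏ i, (X - C (q i)) ^ m i).eval z ≠ 0 := by
  rw [eval_prod]
  exact prod_ne_zero_iff.2 fun i _ ↦ by simp [sub_eq_zero, (hz i).symm]

section NodalCurve

variable {δ : ℕ} {x y : Fin δ → ℂ}

theorem nodalFormNumBasis_eq_nodal_sub_nodal (k : Fin δ) :
    nodalFormNumBasis δ x y k = Lagrange.nodal (univ.erase (.inr k)) (Sum.elim x y) -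
      Lagrange.nodal (univ.erase (.inl k)) (Sum.elim x y) := by
  set R := ∏ l ∈ univ.erase k, ((X - C (x l)) * (X - C (y l)))
  have hnodal : Lagrange.nodal univ (Sum.elim x y) = (X - C (x k)) * ((X - C (y k)) * R) := by
    rw [Lagrange.nodal, Fintype.prod_sum_type, ← prod_mul_distrib, ← mul_assoc,
      ← mul_prod_erase univ _ (mem_univ k)]
    rfl
  have hl : Lagrange.nodal (univ.erase (.inl k)) (Sum.elim x y) = (X - C (y k)) * R := by
    refine mul_left_cancel₀ (X_sub_C_ne_zero (x k)) ?_
    rw [← hnodal, Lagrange.nodal_eq_mul_nodal_erase (mem_univ (.inl k))]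
    rfl
  have hr : Lagrange.nodal (univ.erase (.inr k)) (Sum.elim x y) = (X - C (x k)) * R := by
    refine mul_left_cancel₀ (X_sub_C_ne_zero (y k)) ?_
    rw [mul_left_comm, ← hnodal, Lagrange.nodal_eq_mul_nodal_erase (mem_univ (.inr k))]
    rfl
  rw [nodalFormNumBasis, hl, hr, C_sub]
  ring

theorem nodalFormNum_apply (c : Fin δ → ℂ) :
    nodalFormNum δ x y c = ∑ k, c k • nodalFormNumBasis δ x y k := by
  simp [nodalFormNum]

theorem nodalFormNumBasis_mem_degreeLT (k : Fin δ) :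
    nodalFormNumBasis δ x y k ∈ degreeLT ℂ (2 * δ - 1) := by
  have hdeg (i : Fin δ ⊕ Fin δ) :
      (Lagrange.nodal (univ.erase i) (Sum.elim x y)).degree = ↑(2 * δ - 1) := by
    rw [Lagrange.degree_nodal, card_erase_of_mem (mem_univ i), card_univ, Fintype.card_sum,
      Fintype.card_fin, two_mul]
  rw [mem_degreeLT, nodalFormNumBasis_eq_nodal_sub_nodal, ← hdeg (.inr k)]
  exact degree_sub_lt_left (by rw [hdeg, hdeg]) Lagrange.nodal_ne_zero
    (by rw [Lagrange.nodal_monic.leadingCoeff, Lagrange.nodal_monic.leadingCoeff])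

theorem nodalFormNum_mem_degreeLT (c : Fin δ → ℂ) :
    nodalFormNum δ x y c ∈ degreeLT ℂ (2 * δ - 1) := by
  rw [nodalFormNum_apply]
  exact Submodule.sum_mem _ fun k _ ↦ Submodule.smul_mem _ _ (nodalFormNumBasis_mem_degreeLT k)

theorem sum_eval_nodalFormNum_mul_div (hdist : Function.Injective (Sum.elim x y))
    (c : Fin δ → ℂ) (f : Fin δ ⊕ Fin δ → ℂ) :
    ∑ i, (nodalFormNum δ x y c).eval (Sum.elim x y i) * f i /
        ∏ j ∈ univ.erase i, (Sum.elim x y i - Sum.elim x y j) =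
      ∑ k, c k * (f (.inr k) - f (.inl k)) := by
  simp_rw [nodalFormNum_apply, eval_finsetSum, eval_smul, nodalFormNumBasis_eq_nodal_sub_nodal,
    eval_sub, smul_eq_mul, sum_mul, sum_div]
  rw [sum_comm]
  refine sum_congr rfl fun k _ ↦ ?_
  rw [← Lagrange.sum_eval_nodal_erase_mul_div hdist.injOn (mem_univ (.inr k)) f,
    ← Lagrange.sum_eval_nodal_erase_mul_div hdist.injOn (mem_univ (.inl k)) f,
    ← sum_sub_distrib, mul_sum]
  exact sum_congr rfl fun i _ ↦ by ring

noncomputable def nodeMatrix (δ N : ℕ) (x y : Fin δ → ℂ) (Q : ℂ[X]) :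
    Matrix (Fin δ) (Fin (N + 1)) ℂ :=
  .of fun k j ↦ y k ^ (j : ℕ) / Q.eval (y k) - x k ^ (j : ℕ) / Q.eval (x k)

theorem nodeMatrix_mulVec_degreeLTEquiv {N : ℕ} (Q : ℂ[X]) {P : ℂ[X]} (hP : P ∈ degreeLT ℂ (N + 1))
    (k : Fin δ) :
    (nodeMatrix δ N x y Q *ᵥ degreeLTEquiv ℂ (N + 1) ⟨P, hP⟩) k =
      P.eval (y k) / Q.eval (y k) - P.eval (x k) / Q.eval (x k) := by
  rw [eval_eq_sum_degreeLTEquiv hP, eval_eq_sum_degreeLTEquiv hP, sum_div, sum_div,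
    ← sum_sub_distrib, Matrix.mulVec, dotProduct]
  exact sum_congr rfl fun j _ ↦ by simp only [nodeMatrix, Matrix.of_apply]; ring

theorem finrank_VD_eq_finrank_ker_nodeMatrix {N : ℕ} {Q : ℂ[X]}
    (hQx : ∀ k, Q.eval (x k) ≠ 0) (hQy : ∀ k, Q.eval (y k) ≠ 0) :
    Module.finrank ℂ (VD N δ x y Q) =
      Module.finrank ℂ (LinearMap.ker (nodeMatrix δ N x y Q).mulVecLin) := by
  have hle : VD N δ x y Q ≤ degreeLT ℂ (N + 1) := by
    rw [degreeLT_succ_eq_degreeLE]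
    exact inf_le_left
  have hcomap : (VD N δ x y Q).comap (degreeLT ℂ (N + 1)).subtype =
      LinearMap.ker ((nodeMatrix δ N x y Q).mulVecLin ∘ₗ (degreeLTEquiv ℂ (N + 1)).toLinearMap) := by
    ext ⟨P, hP⟩
    have hPle : P ∈ degreeLE ℂ N := by rwa [← degreeLT_succ_eq_degreeLE]
    simp only [VD, Submodule.mem_comap, Submodule.mem_inf, Submodule.mem_iInf, LinearMap.mem_ker,
      LinearMap.sub_apply, LinearMap.smul_apply, leval_apply, smul_eq_mul, funext_iff,
      LinearMap.comp_apply, Matrix.mulVecLin_apply, LinearEquiv.coe_coe,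
      nodeMatrix_mulVec_degreeLTEquiv, Submodule.coe_subtype, hPle, true_and, Pi.zero_apply]
    refine forall_congr' fun k ↦ ?_
    rw [div_sub_div _ _ (hQy k) (hQx k), div_eq_zero_iff, or_iff_left (mul_ne_zero (hQy k) (hQx k)),
      sub_eq_zero, sub_eq_zero, eq_comm, mul_comm (Q.eval (x k))]
  rw [← (Submodule.comapSubtypeEquivOfLe hle).finrank_eq, hcomap, LinearMap.ker_comp,
    Submodule.comap_equiv_eq_map_symm, LinearEquiv.finrank_map_eq]

theorem OmegaD_eq_ker_nodeMatrix_transpose (hdist : Function.Injective (Sum.elim x y)) {N : ℕ}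
    {Q : ℂ[X]} (hQ : Q ≠ 0) (hQdeg : Q.natDegree = N) (hQx : ∀ k, Q.eval (x k) ≠ 0)
    (hQy : ∀ k, Q.eval (y k) ≠ 0) :
    OmegaD δ x y Q = LinearMap.ker (nodeMatrix δ N x y Q)ᵀ.mulVecLin := by
  have hQnodes : ∀ i ∈ (univ : Finset (Fin δ ⊕ Fin δ)), Q.eval (Sum.elim x y i) ≠ 0 := by
    rintro (k | k) _
    exacts [hQx k, hQy k]
  have hcard : #(univ : Finset (Fin δ ⊕ Fin δ)) = 2 * δ := by
    rw [card_univ, Fintype.card_sum, Fintype.card_fin, two_mul]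
  ext c
  rw [OmegaD, Submodule.mem_comap, Submodule.restrictScalars_mem, Ideal.mem_span_singleton,
    Lagrange.dvd_iff_degree_interpolate_lt hdist.injOn hQ hQnodes (by omega)
      (mem_degreeLT.1 (nodalFormNum_mem_degreeLT c)),
    hQdeg, Nat.sub_sub, add_comm 1, ← hcard, Lagrange.degree_interpolate_lt_sub_iff hdist.injOn,
    LinearMap.mem_ker, funext_iff, Fin.forall_iff]
  refine forall₂_congr fun t ht ↦ ?_
  have hsum : ∑ i, (nodalFormNum δ x y c).eval (Sum.elim x y i) / Q.eval (Sum.elim x y i) *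
        Sum.elim x y i ^ t / ∏ j ∈ univ.erase i, (Sum.elim x y i - Sum.elim x y j) =
      ((nodeMatrix δ N x y Q)ᵀ *ᵥ c) ⟨t, ht⟩ :=
    calc _ = ∑ i, (nodalFormNum δ x y c).eval (Sum.elim x y i) *
            (Sum.elim x y i ^ t / Q.eval (Sum.elim x y i)) /
            ∏ j ∈ univ.erase i, (Sum.elim x y i - Sum.elim x y j) :=
          sum_congr rfl fun i _ ↦ by ring
      _ = ∑ k, c k * (y k ^ t / Q.eval (y k) - x k ^ t / Q.eval (x k)) :=
          sum_eval_nodalFormNum_mul_div hdist c _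
      _ = _ := by simp only [Matrix.mulVec_transpose, Matrix.vecMul, dotProduct, nodeMatrix,
          Matrix.of_apply]
  rw [hsum]
  rfl

theorem finrank_VD_add_eq_add_finrank_OmegaD (hdist : Function.Injective (Sum.elim x y))
    {N : ℕ} {Q : ℂ[X]} (hQ : Q ≠ 0) (hQdeg : Q.natDegree = N) (hQx : ∀ k, Q.eval (x k) ≠ 0)
    (hQy : ∀ k, Q.eval (y k) ≠ 0) :
    Module.finrank ℂ (VD N δ x y Q) + δ = N + 1 + Module.finrank ℂ (OmegaD δ x y Q) := by
  have hV := (nodeMatrix δ N x y Q).rank_add_finrank_ker_mulVecLin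
  have hΩ := (nodeMatrix δ N x y Q)ᵀ.rank_add_finrank_ker_mulVecLin
  rw [Fintype.card_fin] at hV
  rw [Matrix.rank_transpose, Fintype.card_fin] at hΩ
  rw [finrank_VD_eq_finrank_ker_nodeMatrix hQx hQy,
    OmegaD_eq_ker_nodeMatrix_transpose hdist hQ hQdeg hQx hQy]
  omega

end NodalCurve

theorem riemann_roch_nodal_rational_general
    (δ s : ℕ)
    (x y : Fin δ → ℂ)
    (hdist : Function.Injective (Sum.elim x y : Fin δ ⊕ Fin δ → ℂ))
    (q : Fin s → ℂ)
    (hqxy : ∀ i k, q i ≠ x k ∧ q i ≠ y k)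
    (m : Fin s → ℕ)
    (N : ℕ) (hN : N = ∑ i, m i)
    (Q : Polynomial ℂ) (hQ : Q = ∏ i, (X - C (q i)) ^ m i) :
    Module.finrank ℂ (VD N δ x y Q) + δ =
      N + 1 + Module.finrank ℂ (OmegaD δ x y Q) := by
  have hmonic : ∀ i ∈ univ, ((X - C (q i)) ^ m i).Monic := fun i _ ↦ (monic_X_sub_C (q i)).pow _
  have hQdeg : Q.natDegree = N := by
    simp [hQ, hN, natDegree_prod_of_monic _ _ hmonic]
  subst hQ
  exact finrank_VD_add_eq_add_finrank_OmegaD hdist (monic_prod_of_monic _ _ hmonic).ne_zero hQdeg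
    (fun k ↦ eval_prod_X_sub_C_pow_ne_zero m fun i ↦ (hqxy i k).1)
    (fun k ↦ eval_prod_X_sub_C_pow_ne_zero m fun i ↦ (hqxy i k).2)

/-- The genus-zero Riemann–Roch theorem for the nodal rational curve `Σ` obtained from
`ℙ¹` by identifying `x k` with `y k` (`k = 1, …, δ`): for the effective divisor
`D = ∑ m i [q i]` of degree `N = ∑ m i` supported away from the nodes, with
`Q = ∏ (z − q i)^(m i)`, one has `dim V_D = N + 1 − δ + dim Ω_{−D}` (stated without
truncated subtraction as `dim V_D + δ = N + 1 + dim Ω_{−D}`). -/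
theorem riemann_roch_nodal_rational
    (δ s : ℕ) (hδ : 1 ≤ δ)
    (x y : Fin δ → ℂ)
    (hdist : Function.Injective (Sum.elim x y : Fin δ ⊕ Fin δ → ℂ))
    (q : Fin s → ℂ) (hq : Function.Injective q)
    (hqxy : ∀ i k, q i ≠ x k ∧ q i ≠ y k)
    (m : Fin s → ℕ) (hm : ∀ i, 0 < m i)
    (N : ℕ) (hN : N = ∑ i, m i)
    (Q : Polynomial ℂ) (hQ : Q = ∏ i, (X - C (q i)) ^ m i) :
    Module.finrank ℂ (VD N δ x y Q) + δ =
      N + 1 + Module.finrank ℂ (OmegaD δ x y Q) :=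
  riemann_roch_nodal_rational_general δ s x y hdist q hqxy m N hN Q hQ
end
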